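/- arXiv:2605.03113 — 4 statements merged into one kernel-verified Lean document; each statement's English description precedes it below -/
import Mathlib

section
/- In a tidy LD category C, for every morphism f : H → L⅋R into a ⅋-product, the family (κ^f_u)_{u∈𝔝} satisfies the following twelve relations, as equalities of composites of components for all words u ∈ 𝔝 and all vectors of objects (components of α, α⁻¹, δˡ, δʳ and identities being the evident ones making both sides parallel): (1) κ^f_{ā·u}∘δˡ = (δˡ⅋id)∘κ^f_{dˡ·ā·u}; (2) κ^f_{ā⁻¹·dˡ·u}∘δˡ = κ^f_{dˡ·ā⁻¹·u}; (3) κ^f_{ā⁻¹·dʳ·u}∘δˡ = (id⅋δˡ)∘κ^f_{dʳ·u}; (4) κ^f_{ā·dˡ·u}∘δʳ = (δʳ⅋id)∘κ^f_{dˡ·u}; (5) κ^f_{ā·dʳ·u}∘δʳ = κ^f_{dʳ·ā·u}; (6) κ^f_{ā⁻¹·u}∘δʳ = (id⅋δʳ)∘κ^f_{dʳ·ā⁻¹·u}; (7) κ^f_{dˡ·u}∘α = (α⅋id)∘κ^f_{dˡ·dˡ·u}; (8) κ^f_{dʳ·dˡ·u}∘α = κ^f_{dˡ·dʳ·u}; (9)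 κ^f_{dʳ·dʳ·u}∘α = (id⅋α)∘κ^f_{dʳ·u}; (10) κ^f_{dʳ·u}∘α⁻¹ = (id⅋α⁻¹)∘κ^f_{dʳ·dʳ·u}; (11) κ^f_{dˡ·dˡ·u}∘α⁻¹ = (α⁻¹⅋id)∘κ^f_{dˡ·u}; (12) κ^f_{dˡ·dʳ·u}∘α⁻¹ = κ^f_{dʳ·dˡ·u}. -/
open CategoryTheory

namespace LDCoherence

universe v u v₁ u₁ v₂ u₂

/-- A (unitless) linearly distributive category structure on a category `C`. -/
structure LD (C : Type u) [Category.{v} C] where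
  ot : C → C → C
  pa : C → C → C
  otHom : ∀ {X₁ Y₁ X₂ Y₂ : C}, (X₁ ⟶ Y₁) → (X₂ ⟶ Y₂) → (ot X₁ X₂ ⟶ ot Y₁ Y₂)
  paHom : ∀ {X₁ Y₁ X₂ Y₂ : C}, (X₁ ⟶ Y₁) → (X₂ ⟶ Y₂) → (pa X₁ X₂ ⟶ pa Y₁ Y₂)
  otHom_id : ∀ X Y : C, otHom (𝟙 X) (𝟙 Y) = 𝟙 (ot X Y)
  otHom_comp :
    ∀ {X₁ Y₁ Z₁ X₂ Y₂ Z₂ : C} (f₁ : X₁ ⟶ Y₁) (g₁ : Y₁ ⟶ Z₁) (f₂ : X₂ ⟶ Y₂) (g₂ : Y₂ ⟶ Z₂),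
      otHom (f₁ ≫ g₁) (f₂ ≫ g₂) = otHom f₁ f₂ ≫ otHom g₁ g₂
  paHom_id : ∀ X Y : C, paHom (𝟙 X) (𝟙 Y) = 𝟙 (pa X Y)
  paHom_comp :
    ∀ {X₁ Y₁ Z₁ X₂ Y₂ Z₂ : C} (f₁ : X₁ ⟶ Y₁) (g₁ : Y₁ ⟶ Z₁) (f₂ : X₂ ⟶ Y₂) (g₂ : Y₂ ⟶ Z₂),
      paHom (f₁ ≫ g₁) (f₂ ≫ g₂) = paHom f₁ f₂ ≫ paHom g₁ g₂
  α : ∀ A B E : C, ot A (ot B E) ⟶ ot (ot A B) E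
  αInv : ∀ A B E : C, ot (ot A B) E ⟶ ot A (ot B E)
  pα : ∀ A B E : C, pa A (pa B E) ⟶ pa (pa A B) E
  pαInv : ∀ A B E : C, pa (pa A B) E ⟶ pa A (pa B E)
  δl : ∀ A B E : C, ot A (pa B E) ⟶ pa (ot A B) E
  δr : ∀ A B E : C, ot (pa A B) E ⟶ pa A (ot B E)
  α_αInv : ∀ A B E : C, α A B E ≫ αInv A B E = 𝟙 _
  αInv_α : ∀ A B E : C, αInv A B E ≫ α A B E = 𝟙 _
  pα_pαInv : ∀ A B E : C, pα A B E ≫ pαInv A B E = 𝟙 _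
  pαInv_pα : ∀ A B E : C, pαInv A B E ≫ pα A B E = 𝟙 _
  α_natural :
    ∀ {A A' B B' E E' : C} (f : A ⟶ A') (g : B ⟶ B') (h : E ⟶ E'),
      otHom f (otHom g h) ≫ α A' B' E' = α A B E ≫ otHom (otHom f g) h
  pα_natural :
    ∀ {A A' B B' E E' : C} (f : A ⟶ A') (g : B ⟶ B') (h : E ⟶ E'),
      paHom f (paHom g h) ≫ pα A' B' E' = pα A B E ≫ paHom (paHom f g) h
  δl_natural :
    ∀ {A A' B B' E E' : C} (f : A ⟶ A') (g : B ⟶ B') (h : E ⟶ E'),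
      otHom f (paHom g h) ≫ δl A' B' E' = δl A B E ≫ paHom (otHom f g) h
  δr_natural :
    ∀ {A A' B B' E E' : C} (f : A ⟶ A') (g : B ⟶ B') (h : E ⟶ E'),
      otHom (paHom f g) h ≫ δr A' B' E' = δr A B E ≫ paHom f (otHom g h)
  P1 : ∀ A B E D : C,
    α A B (ot E D) ≫ α (ot A B) E D =
      otHom (𝟙 A) (α B E D) ≫ α A (ot B E) D ≫ otHom (α A B E) (𝟙 D)
  P2 : ∀ A B E D : C,
    α A B (pa E D) ≫ δl (ot A B) E D =
      otHom (𝟙 A) (δl B E D) ≫ δl A (ot B E) D ≫ paHom (α A B E) (𝟙 D)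
  P3 : ∀ A B E D : C,
    otHom (𝟙 A) (δr B E D) ≫ δl A B (ot E D) =
      α A (pa B E) D ≫ otHom (δl A B E) (𝟙 D) ≫ δr (ot A B) E D
  P4 : ∀ A B E D : C,
    δl A B (pa E D) ≫ pα (ot A B) E D =
      otHom (𝟙 A) (pα B E D) ≫ δl A (pa B E) D ≫ paHom (δl A B E) (𝟙 D)
  P5 : ∀ A B E D : C,
    δr A B (ot E D) ≫ paHom (𝟙 A) (α B E D) =
      α (pa A B) E D ≫ otHom (δr A B E) (𝟙 D) ≫ δr A (ot B E) D
  P6 : ∀ A B E D : C,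
    δl (pa A B) E D ≫ paHom (δr A B E) (𝟙 D) =
      δr A B (pa E D) ≫ paHom (𝟙 A) (δl B E D) ≫ pα A (ot B E) D
  P7 : ∀ A B E D : C,
    otHom (pα A B E) (𝟙 D) ≫ δr (pa A B) E D =
      δr A (pa B E) D ≫ paHom (𝟙 A) (δr B E D) ≫ pα A B (ot E D)
  P8 : ∀ A B E D : C,
    pα A B (pa E D) ≫ pα (pa A B) E D =
      paHom (𝟙 A) (pα B E D) ≫ pα A (pa B E) D ≫ paHom (pα A B E) (𝟙 D)

variable {C : Type u} [Category.{v} C]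

/-- Tidiness of a linearly distributive category. -/
def LD.Tidy (L : LD C) : Prop :=
  (∀ A₁ A₂ B₁ B₂ : C, L.ot A₁ A₂ = L.ot B₁ B₂ → A₁ = B₁ ∧ A₂ = B₂) ∧
  (∀ A₁ A₂ B₁ B₂ : C, L.pa A₁ A₂ = L.pa B₁ B₂ → A₁ = B₁ ∧ A₂ = B₂) ∧
  (∀ A₁ A₂ B₁ B₂ : C, L.ot A₁ A₂ ≠ L.pa B₁ B₂)

/-- Generators of the free monoid 𝔜. -/
inductive YGen : Type
  | a : YGen
  | ainv : YGen

/-- Generators of the free monoid 𝔝. -/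
inductive ZGen : Type
  | pa : ZGen
  | painv : ZGen
  | dl : ZGen
  | dr : ZGen

/-- A word in the free monoid 𝔜 together with a matching vector of objects:
each letter carries the object of the vector that it consumes in the recursions
defining `H`, `L`, `R` and `τ`.  The outermost constructor is the terminal letter. -/
inductive YW (C : Type u) : Type u
  | nil : YW C
  | a : C → YW C → YW C
  | ainv : C → YW C → YW C

/-- The underlying word in 𝔜 of a word-with-vector. -/
def YW.word {C : Type u} : YW C → List YGen
  | .nil => []
  | .a _ w => YGen.a :: w.word
  | .ainv _ w => YGen.ainv :: w.word

/-- A word in the free monoid 𝔝 together with a matching vector of objects. -/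
inductive ZW (C : Type u) : Type u
  | nil : ZW C
  | pa : C → ZW C → ZW C
  | painv : C → ZW C → ZW C
  | dl : C → ZW C → ZW C
  | dr : C → ZW C → ZW C

/-- The underlying word in 𝔝 of a word-with-vector. -/
def ZW.word {C : Type u} : ZW C → List ZGen
  | .nil => []
  | .pa _ w => ZGen.pa :: w.word
  | .painv _ w => ZGen.painv :: w.word
  | .dl _ w => ZGen.dl :: w.word
  | .dr _ w => ZGen.dr :: w.word

/-- The functor `H^f_u` (object part), for `f` with source `X` and target an ⊗-product. -/
def Hot (L : LD C) (X : C) : YW C → C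
  | .nil => X
  | .a A w => L.ot A (Hot L X w)
  | .ainv A w => L.ot (Hot L X w) A

/-- The functor `L^f_u` (object part), for `f` with target `L.ot Y Z`. -/
def Lot (L : LD C) (Y : C) : YW C → C
  | .nil => Y
  | .a A w => L.ot A (Lot L Y w)
  | .ainv _ w => Lot L Y w

/-- The functor `R^f_u` (object part), for `f` with target `L.ot Y Z`. -/
def Rot (L : LD C) (Z : C) : YW C → C
  | .nil => Z
  | .a _ w => Rot L Z w
  | .ainv A w => L.ot (Rot L Z w) A

/-- The natural transformation `τ^f_u` (componentwise). -/
def tau (L : LD C) {X Y Z : C} (f : X ⟶ L.ot Y Z) :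
    (w : YW C) → (Hot L X w ⟶ L.ot (Lot L Y w) (Rot L Z w))
  | .nil => f
  | .a A w => L.otHom (𝟙 A) (tau L f w) ≫ L.α A (Lot L Y w) (Rot L Z w)
  | .ainv A w => L.otHom (tau L f w) (𝟙 A) ≫ L.αInv (Lot L Y w) (Rot L Z w) A

/-- The functor `H^f_u` (object part), for `f` with source `X` and target a ⅋-product. -/
def Hpa (L : LD C) (X : C) : ZW C → C
  | .nil => X
  | .pa A w => L.pa A (Hpa L X w)
  | .painv A w => L.pa (Hpa L X w) A
  | .dl A w => L.ot A (Hpa L X w)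
  | .dr A w => L.ot (Hpa L X w) A

/-- The functor `L^f_u` (object part), for `f` with target `L.pa Y Z`. -/
def Lpa (L : LD C) (Y : C) : ZW C → C
  | .nil => Y
  | .pa A w => L.pa A (Lpa L Y w)
  | .painv _ w => Lpa L Y w
  | .dl A w => L.ot A (Lpa L Y w)
  | .dr _ w => Lpa L Y w

/-- The functor `R^f_u` (object part), for `f` with target `L.pa Y Z`. -/
def Rpa (L : LD C) (Z : C) : ZW C → C
  | .nil => Z
  | .pa _ w => Rpa L Z w
  | .painv A w => L.pa (Rpa L Z w) A
  | .dl _ w => Rpa L Z w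
  | .dr A w => L.ot (Rpa L Z w) A

/-- The natural transformation `κ^f_u` (componentwise). -/
def kappa (L : LD C) {X Y Z : C} (f : X ⟶ L.pa Y Z) :
    (w : ZW C) → (Hpa L X w ⟶ L.pa (Lpa L Y w) (Rpa L Z w))
  | .nil => f
  | .pa A w => L.paHom (𝟙 A) (kappa L f w) ≫ L.pα A (Lpa L Y w) (Rpa L Z w)
  | .painv A w => L.paHom (kappa L f w) (𝟙 A) ≫ L.pαInv (Lpa L Y w) (Rpa L Z w) A
  | .dl A w => L.otHom (𝟙 A) (kappa L f w) ≫ L.δl A (Lpa L Y w) (Rpa L Z w)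
  | .dr A w => L.otHom (kappa L f w) (𝟙 A) ≫ L.δr (Lpa L Y w) (Rpa L Z w) A

/-- `h` is a component of the associator `α`. -/
def IsAlphaComp (L : LD C) {W T : C} (h : W ⟶ T) : Prop :=
  ∃ (A B E : C) (h₁ : W = L.ot A (L.ot B E)) (h₂ : L.ot (L.ot A B) E = T),
    h = eqToHom h₁ ≫ L.α A B E ≫ eqToHom h₂

/-- `h` is a component of the inverse associator `α⁻¹`. -/
def IsAlphaInvComp (L : LD C) {W T : C} (h : W ⟶ T) : Prop :=
  ∃ (A B E : C) (h₁ : W = L.ot (L.ot A B) E) (h₂ : L.ot A (L.ot B E) = T),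
    h = eqToHom h₁ ≫ L.αInv A B E ≫ eqToHom h₂

/-- `h` is a component of the associator `ᾱ`. -/
def IsPalphaComp (L : LD C) {W T : C} (h : W ⟶ T) : Prop :=
  ∃ (A B E : C) (h₁ : W = L.pa A (L.pa B E)) (h₂ : L.pa (L.pa A B) E = T),
    h = eqToHom h₁ ≫ L.pα A B E ≫ eqToHom h₂

/-- `h` is a component of the inverse associator `ᾱ⁻¹`. -/
def IsPalphaInvComp (L : LD C) {W T : C} (h : W ⟶ T) : Prop :=
  ∃ (A B E : C) (h₁ : W = L.pa (L.pa A B) E) (h₂ : L.pa A (L.pa B E) = T),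
    h = eqToHom h₁ ≫ L.pαInv A B E ≫ eqToHom h₂

/-- `h` is a component of the left distributor `δˡ`. -/
def IsDlComp (L : LD C) {W T : C} (h : W ⟶ T) : Prop :=
  ∃ (A B E : C) (h₁ : W = L.ot A (L.pa B E)) (h₂ : L.pa (L.ot A B) E = T),
    h = eqToHom h₁ ≫ L.δl A B E ≫ eqToHom h₂

/-- `h` is a component of the right distributor `δʳ`. -/
def IsDrComp (L : LD C) {W T : C} (h : W ⟶ T) : Prop :=
  ∃ (A B E : C) (h₁ : W = L.ot (L.pa A B) E) (h₂ : L.pa A (L.ot B E) = T),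
    h = eqToHom h₁ ≫ L.δr A B E ≫ eqToHom h₂

/-- `h` is of the form `id_A ⅋ h'` for some morphism `h'`. -/
def IsIdPaLeft (L : LD C) {W T : C} (h : W ⟶ T) : Prop :=
  ∃ (A W' T' : C) (h' : W' ⟶ T') (h₁ : W = L.pa A W') (h₂ : L.pa A T' = T),
    h = eqToHom h₁ ≫ L.paHom (𝟙 A) h' ≫ eqToHom h₂

/-- `h` is of the form `h' ⅋ id_A` for some morphism `h'`. -/
def IsIdPaRight (L : LD C) {W T : C} (h : W ⟶ T) : Prop :=
  ∃ (A W' T' : C) (h' : W' ⟶ T') (h₁ : W = L.pa W' A) (h₂ : L.pa T' A = T),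
    h = eqToHom h₁ ≫ L.paHom h' (𝟙 A) ≫ eqToHom h₂

/-- The set `Id^⊗` of identities of ⊗-products, as a set of morphisms into ⊗-products. -/
def IdOtSet (L : LD C) ⦃X Y Z : C⦄ (f : X ⟶ L.ot Y Z) : Prop :=
  ∃ hE : X = L.ot Y Z, f = eqToHom hE

/-- The set `Id^⅋` of identities of ⅋-products, as a set of morphisms into ⅋-products. -/
def IdPaSet (L : LD C) ⦃X Y Z : C⦄ (f : X ⟶ L.pa Y Z) : Prop :=
  ∃ hE : X = L.pa Y Z, f = eqToHom hE

/-- `𝔣`-analysability for a set `𝔣` of morphisms whose targets are ⊗-products: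
`g = (g' ⊗ g'') ∘ τ^f_u(Ā)` for some `f ∈ 𝔣`, word `u`, vector `Ā` and morphisms `g', g''`. -/
def OtAnalysable (L : LD C) (𝔣 : ∀ ⦃X Y Z : C⦄, (X ⟶ L.ot Y Z) → Prop)
    {P T : C} (g : P ⟶ T) : Prop :=
  ∃ (X Y Z : C) (f : X ⟶ L.ot Y Z), 𝔣 f ∧
    ∃ (w : YW C) (Q₁ Q₂ : C) (g' : Lot L Y w ⟶ Q₁) (g'' : Rot L Z w ⟶ Q₂)
      (hP : P = Hot L X w) (hT : L.ot Q₁ Q₂ = T),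
      g = eqToHom hP ≫ tau L f w ≫ L.otHom g' g'' ≫ eqToHom hT

/-- `𝔣`-analysability for a set `𝔣` of morphisms whose targets are ⅋-products:
`g = (g' ⅋ g'') ∘ κ^f_u(Ā)` for some `f ∈ 𝔣`, word `u`, vector `Ā` and morphisms `g', g''`. -/
def PaAnalysable (L : LD C) (𝔣 : ∀ ⦃X Y Z : C⦄, (X ⟶ L.pa Y Z) → Prop)
    {P T : C} (g : P ⟶ T) : Prop :=
  ∃ (X Y Z : C) (f : X ⟶ L.pa Y Z), 𝔣 f ∧
    ∃ (w : ZW C) (Q₁ Q₂ : C) (g' : Lpa L Y w ⟶ Q₁) (g'' : Rpa L Z w ⟶ Q₂)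
      (hP : P = Hpa L X w) (hT : L.pa Q₁ Q₂ = T),
      g = eqToHom hP ≫ kappa L f w ≫ L.paHom g' g'' ≫ eqToHom hT

/-- Atomic morphisms of a (tidy) LD category. -/
inductive Atomic (L : LD C) : ∀ {W T : C}, (W ⟶ T) → Prop
  | alpha (A B E : C) : Atomic L (L.α A B E)
  | alphaInv (A B E : C) : Atomic L (L.αInv A B E)
  | palpha (A B E : C) : Atomic L (L.pα A B E)
  | palphaInv (A B E : C) : Atomic L (L.pαInv A B E)
  | dl (A B E : C) : Atomic L (L.δl A B E)
  | dr (A B E : C) : Atomic L (L.δr A B E)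
  | otRightId {W T : C} (f : W ⟶ T) (A : C) : Atomic L f → Atomic L (L.otHom f (𝟙 A))
  | otLeftId {W T : C} (f : W ⟶ T) (A : C) : Atomic L f → Atomic L (L.otHom (𝟙 A) f)
  | paRightId {W T : C} (f : W ⟶ T) (A : C) : Atomic L f → Atomic L (L.paHom f (𝟙 A))
  | paLeftId {W T : C} (f : W ⟶ T) (A : C) : Atomic L f → Atomic L (L.paHom (𝟙 A) f)

/-- Elementary morphisms: identities and finite composites of atomic morphisms. -/
inductive Elementary (L : LD C) : ∀ {W T : C}, (W ⟶ T) → Prop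
  | id (X : C) : Elementary L (𝟙 X)
  | of {W T : C} {f : W ⟶ T} : Atomic L f → Elementary L f
  | comp {W T U : C} {f : W ⟶ T} {g : T ⟶ U} :
      Elementary L f → Elementary L g → Elementary L (f ≫ g)

/-- A strict Frobenius linearly distributive functor between LD categories. -/
structure StrictLDFunctor (Cc : Type u₁) [Category.{v₁} Cc] (Dd : Type u₂) [Category.{v₂} Dd]
    (LC : LD Cc) (LDd : LD Dd) where
  toFunctor : Cc ⥤ Dd
  obj_ot : ∀ X Y : Cc, toFunctor.obj (LC.ot X Y) = LDd.ot (toFunctor.obj X) (toFunctor.obj Y)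
  obj_pa : ∀ X Y : Cc, toFunctor.obj (LC.pa X Y) = LDd.pa (toFunctor.obj X) (toFunctor.obj Y)
  map_ot : ∀ {X₁ Y₁ X₂ Y₂ : Cc} (f : X₁ ⟶ Y₁) (g : X₂ ⟶ Y₂),
    toFunctor.map (LC.otHom f g) =
      eqToHom (obj_ot X₁ X₂) ≫ LDd.otHom (toFunctor.map f) (toFunctor.map g) ≫
        eqToHom (obj_ot Y₁ Y₂).symm
  map_pa : ∀ {X₁ Y₁ X₂ Y₂ : Cc} (f : X₁ ⟶ Y₁) (g : X₂ ⟶ Y₂),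
    toFunctor.map (LC.paHom f g) =
      eqToHom (obj_pa X₁ X₂) ≫ LDd.paHom (toFunctor.map f) (toFunctor.map g) ≫
        eqToHom (obj_pa Y₁ Y₂).symm
  map_α : ∀ A B E : Cc,
    toFunctor.map (LC.α A B E) =
      eqToHom (by simp only [obj_ot]) ≫
        LDd.α (toFunctor.obj A) (toFunctor.obj B) (toFunctor.obj E) ≫
        eqToHom (by simp only [obj_ot])
  map_αInv : ∀ A B E : Cc,
    toFunctor.map (LC.αInv A B E) =
      eqToHom (by simp only [obj_ot]) ≫
        LDd.αInv (toFunctor.obj A) (toFunctor.obj B) (toFunctor.obj E) ≫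
        eqToHom (by simp only [obj_ot])
  map_pα : ∀ A B E : Cc,
    toFunctor.map (LC.pα A B E) =
      eqToHom (by simp only [obj_pa]) ≫
        LDd.pα (toFunctor.obj A) (toFunctor.obj B) (toFunctor.obj E) ≫
        eqToHom (by simp only [obj_pa])
  map_pαInv : ∀ A B E : Cc,
    toFunctor.map (LC.pαInv A B E) =
      eqToHom (by simp only [obj_pa]) ≫
        LDd.pαInv (toFunctor.obj A) (toFunctor.obj B) (toFunctor.obj E) ≫
        eqToHom (by simp only [obj_pa])
  map_δl : ∀ A B E : Cc,
    toFunctor.map (LC.δl A B E) =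
      eqToHom (by simp only [obj_ot, obj_pa]) ≫
        LDd.δl (toFunctor.obj A) (toFunctor.obj B) (toFunctor.obj E) ≫
        eqToHom (by simp only [obj_ot, obj_pa])
  map_δr : ∀ A B E : Cc,
    toFunctor.map (LC.δr A B E) =
      eqToHom (by simp only [obj_ot, obj_pa]) ≫
        LDd.δr (toFunctor.obj A) (toFunctor.obj B) (toFunctor.obj E) ≫
        eqToHom (by simp only [obj_ot, obj_pa])

/-- A (unitless) Frobenius linearly distributive functor between LD categories. -/
structure FrobLDFunctor (Cc : Type u₁) [Category.{v₁} Cc] (Dd : Type u₂) [Category.{v₂} Dd]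
    (LC : LD Cc) (LDd : LD Dd) where
  toFunctor : Cc ⥤ Dd
  μ : ∀ X Y : Cc, LDd.ot (toFunctor.obj X) (toFunctor.obj Y) ⟶ toFunctor.obj (LC.ot X Y)
  Δ : ∀ X Y : Cc, toFunctor.obj (LC.pa X Y) ⟶ LDd.pa (toFunctor.obj X) (toFunctor.obj Y)
  μ_natural : ∀ {X₁ Y₁ X₂ Y₂ : Cc} (f : X₁ ⟶ Y₁) (g : X₂ ⟶ Y₂),
    LDd.otHom (toFunctor.map f) (toFunctor.map g) ≫ μ Y₁ Y₂ =
      μ X₁ X₂ ≫ toFunctor.map (LC.otHom f g)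
  Δ_natural : ∀ {X₁ Y₁ X₂ Y₂ : Cc} (f : X₁ ⟶ Y₁) (g : X₂ ⟶ Y₂),
    toFunctor.map (LC.paHom f g) ≫ Δ Y₁ Y₂ =
      Δ X₁ X₂ ≫ LDd.paHom (toFunctor.map f) (toFunctor.map g)
  H1 : ∀ A B E : Cc,
    LDd.α (toFunctor.obj A) (toFunctor.obj B) (toFunctor.obj E) ≫
        LDd.otHom (μ A B) (𝟙 (toFunctor.obj E)) ≫ μ (LC.ot A B) E =
      LDd.otHom (𝟙 (toFunctor.obj A)) (μ B E) ≫ μ A (LC.ot B E) ≫ toFunctor.map (LC.α A B E)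
  H2 : ∀ A B E : Cc,
    LDd.otHom (𝟙 (toFunctor.obj A)) (Δ B E) ≫
        LDd.δl (toFunctor.obj A) (toFunctor.obj B) (toFunctor.obj E) ≫
        LDd.paHom (μ A B) (𝟙 (toFunctor.obj E)) =
      μ A (LC.pa B E) ≫ toFunctor.map (LC.δl A B E) ≫ Δ (LC.ot A B) E
  H3 : ∀ A B E : Cc,
    LDd.otHom (Δ A B) (𝟙 (toFunctor.obj E)) ≫
        LDd.δr (toFunctor.obj A) (toFunctor.obj B) (toFunctor.obj E) ≫
        LDd.paHom (𝟙 (toFunctor.obj A)) (μ B E) =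
      μ (LC.pa A B) E ≫ toFunctor.map (LC.δr A B E) ≫ Δ A (LC.ot B E)
  H4 : ∀ A B E : Cc,
    Δ A (LC.pa B E) ≫ LDd.paHom (𝟙 (toFunctor.obj A)) (Δ B E) ≫
        LDd.pα (toFunctor.obj A) (toFunctor.obj B) (toFunctor.obj E) =
      toFunctor.map (LC.pα A B E) ≫ Δ (LC.pa A B) E ≫
        LDd.paHom (Δ A B) (𝟙 (toFunctor.obj E))

variable {Cc : Type u₁} [Category.{v₁} Cc] {Dd : Type u₂} [Category.{v₂} Dd]
  {LC : LD Cc} {LDd : LD Dd}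

/-- Tidiness of a Frobenius LD functor: the image of an object is never a tensor product. -/
def FrobLDFunctor.TidyF (F : FrobLDFunctor Cc Dd LC LDd) : Prop :=
  ∀ (A : Cc) (P Q : Dd),
    F.toFunctor.obj A ≠ LDd.ot P Q ∧ F.toFunctor.obj A ≠ LDd.pa P Q

/-- Multiplicative morphisms of the target category of a Frobenius LD functor. -/
inductive Multiplicative (F : FrobLDFunctor Cc Dd LC LDd) : ∀ {W T : Dd}, (W ⟶ T) → Prop
  | id (X : Cc) : Multiplicative F (𝟙 (F.toFunctor.obj X))
  | mu {W₁ W₂ : Dd} {X Y : Cc} (f : W₁ ⟶ F.toFunctor.obj X) (g : W₂ ⟶ F.toFunctor.obj Y) :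
      Multiplicative F f → Multiplicative F g →
      Multiplicative F (LDd.otHom f g ≫ F.μ X Y)

/-- `F`-atomic morphisms of the target category of a Frobenius LD functor. -/
inductive FAtomic (F : FrobLDFunctor Cc Dd LC LDd) : ∀ {W T : Dd}, (W ⟶ T) → Prop
  | alpha (A B E : Dd) : FAtomic F (LDd.α A B E)
  | alphaInv (A B E : Dd) : FAtomic F (LDd.αInv A B E)
  | palpha (A B E : Dd) : FAtomic F (LDd.pα A B E)
  | palphaInv (A B E : Dd) : FAtomic F (LDd.pαInv A B E)
  | dl (A B E : Dd) : FAtomic F (LDd.δl A B E)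
  | dr (A B E : Dd) : FAtomic F (LDd.δr A B E)
  | mu (X Y : Cc) : FAtomic F (F.μ X Y)
  | delta (X Y : Cc) : FAtomic F (F.Δ X Y)
  | map {X Y : Cc} (f : X ⟶ Y) : Elementary LC f → FAtomic F (F.toFunctor.map f)
  | otRightId {W T : Dd} (f : W ⟶ T) (A : Dd) : FAtomic F f → FAtomic F (LDd.otHom f (𝟙 A))
  | otLeftId {W T : Dd} (f : W ⟶ T) (A : Dd) : FAtomic F f → FAtomic F (LDd.otHom (𝟙 A) f)
  | paRightId {W T : Dd} (f : W ⟶ T) (A : Dd) : FAtomic F f → FAtomic F (LDd.paHom f (𝟙 A))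
  | paLeftId {W T : Dd} (f : W ⟶ T) (A : Dd) : FAtomic F f → FAtomic F (LDd.paHom (𝟙 A) f)

/-- `F`-elementary morphisms: identities and finite composites of `F`-atomic morphisms. -/
inductive FElementary (F : FrobLDFunctor Cc Dd LC LDd) : ∀ {W T : Dd}, (W ⟶ T) → Prop
  | id (X : Dd) : FElementary F (𝟙 X)
  | of {W T : Dd} {f : W ⟶ T} : FAtomic F f → FElementary F f
  | comp {W T U : Dd} {f : W ⟶ T} {g : T ⟶ U} :
      FElementary F f → FElementary F g → FElementary F (f ≫ g)

/-- The set `𝔡` of morphisms of the form `Δ ∘ F(κ^i_u(X̄))`, where `i` is the identity of a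
⅋-product of the source category. -/
def frakD (F : FrobLDFunctor Cc Dd LC LDd) ⦃P Q₁ Q₂ : Dd⦄ (g : P ⟶ LDd.pa Q₁ Q₂) : Prop :=
  ∃ (Y Z : Cc) (w : ZW Cc) (hP : P = F.toFunctor.obj (Hpa LC (LC.pa Y Z) w))
    (h₁ : F.toFunctor.obj (Lpa LC Y w) = Q₁) (h₂ : F.toFunctor.obj (Rpa LC Z w) = Q₂),
    g = eqToHom hP ≫ F.toFunctor.map (kappa LC (𝟙 (LC.pa Y Z)) w) ≫
        F.Δ (Lpa LC Y w) (Rpa LC Z w) ≫ eqToHom (by rw [h₁, h₂])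


section PentagonHelpers

variable {C : Type u} [Category.{v} C] (L : LD C)

lemma ot_ot {X₁ Y₁ Z₁ X₂ Y₂ Z₂ : C} (f₁ : X₁ ⟶ Y₁) (g₁ : Y₁ ⟶ Z₁) (f₂ : X₂ ⟶ Y₂)
    (g₂ : Y₂ ⟶ Z₂) :
    L.otHom f₁ f₂ ≫ L.otHom g₁ g₂ = L.otHom (f₁ ≫ g₁) (f₂ ≫ g₂) :=
  (L.otHom_comp _ _ _ _).symm

lemma ot_ot_assoc {X₁ Y₁ Z₁ X₂ Y₂ Z₂ W : C} (f₁ : X₁ ⟶ Y₁) (g₁ : Y₁ ⟶ Z₁) (f₂ : X₂ ⟶ Y₂)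
    (g₂ : Y₂ ⟶ Z₂) (h : L.ot Z₁ Z₂ ⟶ W) :
    L.otHom f₁ f₂ ≫ (L.otHom g₁ g₂ ≫ h) = L.otHom (f₁ ≫ g₁) (f₂ ≫ g₂) ≫ h := by
  rw [← Category.assoc, ot_ot]

lemma pa_pa {X₁ Y₁ Z₁ X₂ Y₂ Z₂ : C} (f₁ : X₁ ⟶ Y₁) (g₁ : Y₁ ⟶ Z₁) (f₂ : X₂ ⟶ Y₂)
    (g₂ : Y₂ ⟶ Z₂) :
    L.paHom f₁ f₂ ≫ L.paHom g₁ g₂ = L.paHom (f₁ ≫ g₁) (f₂ ≫ g₂) :=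
  (L.paHom_comp _ _ _ _).symm

lemma pa_pa_assoc {X₁ Y₁ Z₁ X₂ Y₂ Z₂ W : C} (f₁ : X₁ ⟶ Y₁) (g₁ : Y₁ ⟶ Z₁) (f₂ : X₂ ⟶ Y₂)
    (g₂ : Y₂ ⟶ Z₂) (h : L.pa Z₁ Z₂ ⟶ W) :
    L.paHom f₁ f₂ ≫ (L.paHom g₁ g₂ ≫ h) = L.paHom (f₁ ≫ g₁) (f₂ ≫ g₂) ≫ h := by
  rw [← Category.assoc, pa_pa]

lemma αInv_natural {A A' B B' E E' : C} (f : A ⟶ A') (g : B ⟶ B') (h : E ⟶ E') :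
    L.otHom (L.otHom f g) h ≫ L.αInv A' B' E' = L.αInv A B E ≫ L.otHom f (L.otHom g h) := by
  have n := L.α_natural f g h
  rw [← Category.id_comp (L.otHom (L.otHom f g) h ≫ L.αInv A' B' E'), ← L.αInv_α A B E,
    Category.assoc]
  congr 1
  rw [← Category.assoc, ← n, Category.assoc, L.α_αInv, Category.comp_id]

lemma P2inv (A B E D : C) :
    L.αInv A B (L.pa E D) ≫ L.otHom (𝟙 A) (L.δl B E D) ≫ L.δl A (L.ot B E) D =
    L.δl (L.ot A B) E D ≫ L.paHom (L.αInv A B E) (𝟙 D) := by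
  have h2 : L.α A B (L.pa E D) ≫ L.δl (L.ot A B) E D ≫ L.paHom (L.αInv A B E) (𝟙 D) =
      L.otHom (𝟙 A) (L.δl B E D) ≫ L.δl A (L.ot B E) D := by
    rw [← Category.assoc, L.P2]
    simp only [Category.assoc, pa_pa, L.α_αInv, Category.comp_id, L.paHom_id]
  rw [← h2, ← Category.assoc, L.αInv_α, Category.id_comp]

lemma P3inv (A B E D : C) :
    L.αInv A (L.pa B E) D ≫ L.otHom (𝟙 A) (L.δr B E D) ≫ L.δl A B (L.ot E D) =
    L.otHom (L.δl A B E) (𝟙 D) ≫ L.δr (L.ot A B) E D := by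
  rw [L.P3, ← Category.assoc, L.αInv_α, Category.id_comp]

lemma P4inv (A B E D : C) :
    L.δl A (L.pa B E) D ≫ L.paHom (L.δl A B E) (𝟙 D) ≫ L.pαInv (L.ot A B) E D =
    L.otHom (𝟙 A) (L.pαInv B E D) ≫ L.δl A B (L.pa E D) := by
  have e : L.δl A B (L.pa E D) =
      (L.otHom (𝟙 A) (L.pα B E D) ≫ L.δl A (L.pa B E) D ≫ L.paHom (L.δl A B E) (𝟙 D)) ≫
        L.pαInv (L.ot A B) E D := by
    rw [← L.P4, Category.assoc, L.pα_pαInv, Category.comp_id]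
  rw [e]
  simp only [Category.assoc, ot_ot_assoc, L.pαInv_pα, L.otHom_id, Category.id_comp]

lemma P5inv (A B E D : C) :
    L.αInv (L.pa A B) E D ≫ L.δr A B (L.ot E D) =
    L.otHom (L.δr A B E) (𝟙 D) ≫ L.δr A (L.ot B E) D ≫ L.paHom (𝟙 A) (L.αInv B E D) := by
  have e : L.δr A B (L.ot E D) =
      (L.α (L.pa A B) E D ≫ L.otHom (L.δr A B E) (𝟙 D) ≫ L.δr A (L.ot B E) D) ≫
        L.paHom (𝟙 A) (L.αInv B E D) := by
    rw [← L.P5]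
    simp only [Category.assoc, pa_pa, L.α_αInv, Category.comp_id, L.paHom_id]
  rw [e, ← Category.assoc, ← Category.assoc, L.αInv_α, Category.id_comp, Category.assoc]

lemma P6' (A B E D : C) :
    L.δl (L.pa A B) E D ≫ L.paHom (L.δr A B E) (𝟙 D) ≫ L.pαInv A (L.ot B E) D =
    L.δr A B (L.pa E D) ≫ L.paHom (𝟙 A) (L.δl B E D) := by
  rw [← Category.assoc, L.P6]
  simp only [Category.assoc, L.pα_pαInv, Category.comp_id]

lemma P7inv (A B E D : C) :
    L.δr (L.pa A B) E D ≫ L.pαInv A B (L.ot E D) =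
    L.otHom (L.pαInv A B E) (𝟙 D) ≫ L.δr A (L.pa B E) D ≫ L.paHom (𝟙 A) (L.δr B E D) := by
  have e : L.δr (L.pa A B) E D =
      L.otHom (L.pαInv A B E) (𝟙 D) ≫ L.δr A (L.pa B E) D ≫ L.paHom (𝟙 A) (L.δr B E D) ≫
        L.pα A B (L.ot E D) := by
    rw [← L.P7]
    simp only [ot_ot_assoc, L.pαInv_pα, Category.id_comp, L.otHom_id]
  rw [e]
  simp only [Category.assoc, L.pα_pαInv, Category.comp_id]

end PentagonHelpers

section GenericRelations

variable {C : Type u} [Category.{v} C] (L : LD C)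

lemma rel1 {H P Q : C} (g : H ⟶ L.pa P Q) (A B : C) :
    L.δl A B H ≫ L.paHom (𝟙 (L.ot A B)) g ≫ L.pα (L.ot A B) P Q =
    L.otHom (𝟙 A) (L.paHom (𝟙 B) g ≫ L.pα B P Q) ≫ L.δl A (L.pa B P) Q ≫
      L.paHom (L.δl A B P) (𝟙 Q) := by
  have n := L.δl_natural (𝟙 A) (𝟙 B) g
  rw [L.otHom_id] at n
  rw [← Category.assoc, ← n, Category.assoc, L.P4, ot_ot_assoc, Category.id_comp]

lemma rel2 {H P Q : C} (g : H ⟶ L.pa P Q) (A E : C) :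
    L.δl A H E ≫ L.paHom (L.otHom (𝟙 A) g ≫ L.δl A P Q) (𝟙 E) ≫ L.pαInv (L.ot A P) Q E =
    L.otHom (𝟙 A) (L.paHom g (𝟙 E) ≫ L.pαInv P Q E) ≫ L.δl A P (L.pa Q E) := by
  have s : L.paHom (L.otHom (𝟙 A) g ≫ L.δl A P Q) (𝟙 E) =
      L.paHom (L.otHom (𝟙 A) g) (𝟙 E) ≫ L.paHom (L.δl A P Q) (𝟙 E) := by
    have := L.paHom_comp (L.otHom (𝟙 A) g) (L.δl A P Q) (𝟙 E) (𝟙 E)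
    rwa [Category.comp_id] at this
  have n := L.δl_natural (𝟙 A) g (𝟙 E)
  rw [s]
  simp only [Category.assoc]
  rw [← Category.assoc, ← n, Category.assoc, P4inv, ot_ot_assoc, Category.id_comp]

lemma rel3 {H P Q : C} (g : H ⟶ L.pa P Q) (B E : C) :
    L.δl H B E ≫ L.paHom (L.otHom g (𝟙 B) ≫ L.δr P Q B) (𝟙 E) ≫ L.pαInv P (L.ot Q B) E =
    L.otHom g (𝟙 (L.pa B E)) ≫ L.δr P Q (L.pa B E) ≫ L.paHom (𝟙 P) (L.δl Q B E) := by
  have s : L.paHom (L.otHom g (𝟙 B) ≫ L.δr P Q B) (𝟙 E) =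
      L.paHom (L.otHom g (𝟙 B)) (𝟙 E) ≫ L.paHom (L.δr P Q B) (𝟙 E) := by
    have := L.paHom_comp (L.otHom g (𝟙 B)) (L.δr P Q B) (𝟙 E) (𝟙 E)
    rwa [Category.comp_id] at this
  have n := L.δl_natural g (𝟙 B) (𝟙 E)
  rw [L.paHom_id] at n
  rw [s]
  simp only [Category.assoc]
  rw [← Category.assoc, ← n, Category.assoc, P6']

lemma rel4 {H P Q : C} (g : H ⟶ L.pa P Q) (Pp A : C) :
    L.δr Pp A H ≫ L.paHom (𝟙 Pp) (L.otHom (𝟙 A) g ≫ L.δl A P Q) ≫ L.pα Pp (L.ot A P) Q =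
    L.otHom (𝟙 (L.pa Pp A)) g ≫ L.δl (L.pa Pp A) P Q ≫ L.paHom (L.δr Pp A P) (𝟙 Q) := by
  have s : L.paHom (𝟙 Pp) (L.otHom (𝟙 A) g ≫ L.δl A P Q) =
      L.paHom (𝟙 Pp) (L.otHom (𝟙 A) g) ≫ L.paHom (𝟙 Pp) (L.δl A P Q) := by
    have := L.paHom_comp (𝟙 Pp) (𝟙 Pp) (L.otHom (𝟙 A) g) (L.δl A P Q)
    rwa [Category.comp_id] at this
  have n := L.δr_natural (𝟙 Pp) (𝟙 A) g
  rw [L.paHom_id] at n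
  rw [s]
  simp only [Category.assoc]
  rw [← Category.assoc, ← n, Category.assoc, ← L.P6]

lemma rel5 {H P Q : C} (g : H ⟶ L.pa P Q) (Pp E : C) :
    L.δr Pp H E ≫ L.paHom (𝟙 Pp) (L.otHom g (𝟙 E) ≫ L.δr P Q E) ≫ L.pα Pp P (L.ot Q E) =
    L.otHom (L.paHom (𝟙 Pp) g ≫ L.pα Pp P Q) (𝟙 E) ≫ L.δr (L.pa Pp P) Q E := by
  have s : L.paHom (𝟙 Pp) (L.otHom g (𝟙 E) ≫ L.δr P Q E) =
      L.paHom (𝟙 Pp) (L.otHom g (𝟙 E)) ≫ L.paHom (𝟙 Pp) (L.δr P Q E) := by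
    have := L.paHom_comp (𝟙 Pp) (𝟙 Pp) (L.otHom g (𝟙 E)) (L.δr P Q E)
    rwa [Category.comp_id] at this
  have n := L.δr_natural (𝟙 Pp) g (𝟙 E)
  rw [s]
  simp only [Category.assoc]
  rw [← Category.assoc, ← n, Category.assoc, ← L.P7, ot_ot_assoc]
  simp only [Category.comp_id]

lemma rel6 {H P Q : C} (g : H ⟶ L.pa P Q) (B E : C) :
    L.δr H B E ≫ L.paHom g (𝟙 (L.ot B E)) ≫ L.pαInv P Q (L.ot B E) =
    L.otHom (L.paHom g (𝟙 B) ≫ L.pαInv P Q B) (𝟙 E) ≫ L.δr P (L.pa Q B) E ≫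
      L.paHom (𝟙 P) (L.δr Q B E) := by
  have n := L.δr_natural g (𝟙 B) (𝟙 E)
  rw [L.otHom_id] at n
  rw [← Category.assoc, ← n, Category.assoc, P7inv, ot_ot_assoc]
  simp only [Category.comp_id]

lemma rel7 {H P Q : C} (g : H ⟶ L.pa P Q) (A₁ A₂ : C) :
    L.α A₁ A₂ H ≫ L.otHom (𝟙 (L.ot A₁ A₂)) g ≫ L.δl (L.ot A₁ A₂) P Q =
    L.otHom (𝟙 A₁) (L.otHom (𝟙 A₂) g ≫ L.δl A₂ P Q) ≫ L.δl A₁ (L.ot A₂ P) Q ≫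
      L.paHom (L.α A₁ A₂ P) (𝟙 Q) := by
  have n := L.α_natural (𝟙 A₁) (𝟙 A₂) g
  rw [L.otHom_id] at n
  rw [← Category.assoc, ← n, Category.assoc, L.P2, ot_ot_assoc, Category.id_comp]

lemma rel8 {H P Q : C} (g : H ⟶ L.pa P Q) (A E : C) :
    L.α A H E ≫ L.otHom (L.otHom (𝟙 A) g ≫ L.δl A P Q) (𝟙 E) ≫ L.δr (L.ot A P) Q E =
    L.otHom (𝟙 A) (L.otHom g (𝟙 E) ≫ L.δr P Q E) ≫ L.δl A P (L.ot Q E) := by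
  have s : L.otHom (L.otHom (𝟙 A) g ≫ L.δl A P Q) (𝟙 E) =
      L.otHom (L.otHom (𝟙 A) g) (𝟙 E) ≫ L.otHom (L.δl A P Q) (𝟙 E) := by
    have := L.otHom_comp (L.otHom (𝟙 A) g) (L.δl A P Q) (𝟙 E) (𝟙 E)
    rwa [Category.comp_id] at this
  have n := L.α_natural (𝟙 A) g (𝟙 E)
  rw [s]
  simp only [Category.assoc]
  rw [← Category.assoc, ← n, Category.assoc, ← L.P3, ot_ot_assoc, Category.id_comp]

lemma rel9 {H P Q : C} (g : H ⟶ L.pa P Q) (A E : C) :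
    L.α H A E ≫ L.otHom (L.otHom g (𝟙 A) ≫ L.δr P Q A) (𝟙 E) ≫ L.δr P (L.ot Q A) E =
    L.otHom g (𝟙 (L.ot A E)) ≫ L.δr P Q (L.ot A E) ≫ L.paHom (𝟙 P) (L.α Q A E) := by
  have s : L.otHom (L.otHom g (𝟙 A) ≫ L.δr P Q A) (𝟙 E) =
      L.otHom (L.otHom g (𝟙 A)) (𝟙 E) ≫ L.otHom (L.δr P Q A) (𝟙 E) := by
    have := L.otHom_comp (L.otHom g (𝟙 A)) (L.δr P Q A) (𝟙 E) (𝟙 E)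
    rwa [Category.comp_id] at this
  have n := L.α_natural g (𝟙 A) (𝟙 E)
  rw [L.otHom_id] at n
  rw [s]
  simp only [Category.assoc]
  rw [← Category.assoc, ← n, Category.assoc, ← L.P5]

lemma rel10 {H P Q : C} (g : H ⟶ L.pa P Q) (A E : C) :
    L.αInv H A E ≫ L.otHom g (𝟙 (L.ot A E)) ≫ L.δr P Q (L.ot A E) =
    L.otHom (L.otHom g (𝟙 A) ≫ L.δr P Q A) (𝟙 E) ≫ L.δr P (L.ot Q A) E ≫
      L.paHom (𝟙 P) (L.αInv Q A E) := by
  have s : L.otHom (L.otHom g (𝟙 A) ≫ L.δr P Q A) (𝟙 E) =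
      L.otHom (L.otHom g (𝟙 A)) (𝟙 E) ≫ L.otHom (L.δr P Q A) (𝟙 E) := by
    have := L.otHom_comp (L.otHom g (𝟙 A)) (L.δr P Q A) (𝟙 E) (𝟙 E)
    rwa [Category.comp_id] at this
  have n := αInv_natural L g (𝟙 A) (𝟙 E)
  rw [L.otHom_id] at n
  rw [s]
  simp only [Category.assoc]
  rw [← Category.assoc, ← n, Category.assoc, P5inv, ot_ot_assoc]

lemma rel11 {H P Q : C} (g : H ⟶ L.pa P Q) (A₁ A₂ : C) :
    L.αInv A₁ A₂ H ≫ L.otHom (𝟙 A₁) (L.otHom (𝟙 A₂) g ≫ L.δl A₂ P Q) ≫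
      L.δl A₁ (L.ot A₂ P) Q =
    L.otHom (𝟙 (L.ot A₁ A₂)) g ≫ L.δl (L.ot A₁ A₂) P Q ≫
      L.paHom (L.αInv A₁ A₂ P) (𝟙 Q) := by
  have s : L.otHom (𝟙 A₁) (L.otHom (𝟙 A₂) g ≫ L.δl A₂ P Q) =
      L.otHom (𝟙 A₁) (L.otHom (𝟙 A₂) g) ≫ L.otHom (𝟙 A₁) (L.δl A₂ P Q) := by
    have := L.otHom_comp (𝟙 A₁) (𝟙 A₁) (L.otHom (𝟙 A₂) g) (L.δl A₂ P Q)
    rwa [Category.comp_id] at this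
  have n := αInv_natural L (𝟙 A₁) (𝟙 A₂) g
  rw [L.otHom_id] at n
  rw [s]
  simp only [Category.assoc]
  rw [← Category.assoc, ← n, Category.assoc, P2inv]

lemma rel12 {H P Q : C} (g : H ⟶ L.pa P Q) (A E : C) :
    L.αInv A H E ≫ L.otHom (𝟙 A) (L.otHom g (𝟙 E) ≫ L.δr P Q E) ≫ L.δl A P (L.ot Q E) =
    L.otHom (L.otHom (𝟙 A) g ≫ L.δl A P Q) (𝟙 E) ≫ L.δr (L.ot A P) Q E := by
  have s : L.otHom (𝟙 A) (L.otHom g (𝟙 E) ≫ L.δr P Q E) =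
      L.otHom (𝟙 A) (L.otHom g (𝟙 E)) ≫ L.otHom (𝟙 A) (L.δr P Q E) := by
    have := L.otHom_comp (𝟙 A) (𝟙 A) (L.otHom g (𝟙 E)) (L.δr P Q E)
    rwa [Category.comp_id] at this
  have s2 : L.otHom (L.otHom (𝟙 A) g ≫ L.δl A P Q) (𝟙 E) =
      L.otHom (L.otHom (𝟙 A) g) (𝟙 E) ≫ L.otHom (L.δl A P Q) (𝟙 E) := by
    have := L.otHom_comp (L.otHom (𝟙 A) g) (L.δl A P Q) (𝟙 E) (𝟙 E)
    rwa [Category.comp_id] at this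
  have n := αInv_natural L (𝟙 A) g (𝟙 E)
  rw [s, s2]
  simp only [Category.assoc]
  rw [← Category.assoc, ← n, Category.assoc, P3inv]

end GenericRelations

/-- The twelve relations satisfied by the family `(κ^f_u)` involving `δˡ`, `δʳ`, `α`, `α⁻¹`
(Lemma "pushing κ through 2"). -/
theorem kappa_relations_distributors {C : Type u} [Category.{v} C] (L : LD C) (hTidy : L.Tidy)
    {X Y Z : C} (f : X ⟶ L.pa Y Z) :
    (∀ (w : ZW C) (A B : C),
      L.δl A B (Hpa L X w) ≫ kappa L f (ZW.pa (L.ot A B) w) =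
        kappa L f (ZW.dl A (ZW.pa B w)) ≫
          L.paHom (L.δl A B (Lpa L Y w)) (𝟙 (Rpa L Z w))) ∧
    (∀ (w : ZW C) (A E : C),
      L.δl A (Hpa L X w) E ≫ kappa L f (ZW.painv E (ZW.dl A w)) =
        kappa L f (ZW.dl A (ZW.painv E w))) ∧
    (∀ (w : ZW C) (B E : C),
      L.δl (Hpa L X w) B E ≫ kappa L f (ZW.painv E (ZW.dr B w)) =
        kappa L f (ZW.dr (L.pa B E) w) ≫
          L.paHom (𝟙 (Lpa L Y w)) (L.δl (Rpa L Z w) B E)) ∧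
    (∀ (w : ZW C) (P A : C),
      L.δr P A (Hpa L X w) ≫ kappa L f (ZW.pa P (ZW.dl A w)) =
        kappa L f (ZW.dl (L.pa P A) w) ≫
          L.paHom (L.δr P A (Lpa L Y w)) (𝟙 (Rpa L Z w))) ∧
    (∀ (w : ZW C) (P E : C),
      L.δr P (Hpa L X w) E ≫ kappa L f (ZW.pa P (ZW.dr E w)) =
        kappa L f (ZW.dr E (ZW.pa P w))) ∧
    (∀ (w : ZW C) (B E : C),
      L.δr (Hpa L X w) B E ≫ kappa L f (ZW.painv (L.ot B E) w) =
        kappa L f (ZW.dr E (ZW.painv B w)) ≫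
          L.paHom (𝟙 (Lpa L Y w)) (L.δr (Rpa L Z w) B E)) ∧
    (∀ (w : ZW C) (A₁ A₂ : C),
      L.α A₁ A₂ (Hpa L X w) ≫ kappa L f (ZW.dl (L.ot A₁ A₂) w) =
        kappa L f (ZW.dl A₁ (ZW.dl A₂ w)) ≫
          L.paHom (L.α A₁ A₂ (Lpa L Y w)) (𝟙 (Rpa L Z w))) ∧
    (∀ (w : ZW C) (A E : C),
      L.α A (Hpa L X w) E ≫ kappa L f (ZW.dr E (ZW.dl A w)) =
        kappa L f (ZW.dl A (ZW.dr E w))) ∧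
    (∀ (w : ZW C) (A E : C),
      L.α (Hpa L X w) A E ≫ kappa L f (ZW.dr E (ZW.dr A w)) =
        kappa L f (ZW.dr (L.ot A E) w) ≫
          L.paHom (𝟙 (Lpa L Y w)) (L.α (Rpa L Z w) A E)) ∧
    (∀ (w : ZW C) (A E : C),
      L.αInv (Hpa L X w) A E ≫ kappa L f (ZW.dr (L.ot A E) w) =
        kappa L f (ZW.dr E (ZW.dr A w)) ≫
          L.paHom (𝟙 (Lpa L Y w)) (L.αInv (Rpa L Z w) A E)) ∧
    (∀ (w : ZW C) (A₁ A₂ : C),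
      L.αInv A₁ A₂ (Hpa L X w) ≫ kappa L f (ZW.dl A₁ (ZW.dl A₂ w)) =
        kappa L f (ZW.dl (L.ot A₁ A₂) w) ≫
          L.paHom (L.αInv A₁ A₂ (Lpa L Y w)) (𝟙 (Rpa L Z w))) ∧
    (∀ (w : ZW C) (A E : C),
      L.αInv A (Hpa L X w) E ≫ kappa L f (ZW.dl A (ZW.dr E w)) =
        kappa L f (ZW.dr E (ZW.dl A w))) := by
  refine ⟨fun w A B => ?_, fun w A E => ?_, fun w B E => ?_, fun w Pp A => ?_,
    fun w Pp E => ?_, fun w B E => ?_, fun w A₁ A₂ => ?_, fun w A E => ?_,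
    fun w A E => ?_, fun w A E => ?_, fun w A₁ A₂ => ?_, fun w A E => ?_⟩ <;>
      simp only [kappa, Hpa, Lpa, Rpa, Category.assoc]
  · exact rel1 L (kappa L f w) A B
  · exact rel2 L (kappa L f w) A E
  · exact rel3 L (kappa L f w) B E
  · exact rel4 L (kappa L f w) Pp A
  · exact rel5 L (kappa L f w) Pp E
  · exact rel6 L (kappa L f w) B E
  · exact rel7 L (kappa L f w) A₁ A₂
  · exact rel8 L (kappa L f w) A E
  · exact rel9 L (kappa L f w) A E
  · exact rel10 L (kappa L f w) A E
  · exact rel11 L (kappa L f w) A₁ A₂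
  · exact rel12 L (kappa L f w) A E

end LDCoherence
end

section
/- Normal form for elementary morphisms in a tidy LD category: let f be an elementary morphism in a tidy LD category C. Then: (i) if the target of f is neither an ⊗-product nor a ⅋-product, then f is an identity; (ii) if the target of f is an ⊗-product, then f is Id^⊗-analysable, i.e., f = (g'⊗g'')∘τ^i_u(Ā) for some identity i of an ⊗-product, word u ∈ 𝔜, vector Ā, and morphisms g', g''; (iii) if the target of f is a ⅋-product, then f is Id^⅋-analysable, i.e., f = (g'⅋g'')∘κ^i_u(Ā) for some identity i of a ⅋-product, word u ∈ 𝔝, vector Ā, and morphisms g', g''. -/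
/-!
An atomic morphism `h` followed by `τ^i_u(Ā)` (resp. `κ^i_u(Ā)`), with `i` the identity of a
⊗-product (resp. ⅋-product), is again of the form `(g' ⊗ g'') ∘ τ^i_v(B̄)` (resp.
`(g' ⅋ g'') ∘ κ^i_v(B̄)`). Tidiness determines how the target of `h` meets the outermost letters
of `u`, leaving finitely many configurations. When `h` is a component of `α`, `ᾱ`, `δˡ`, `δʳ` or
an inverse, each configuration is naturality of the structural maps followed by one of the
pentagons (P1)–(P8), possibly inverted; when `h` whiskers a smaller atomic morphism it follows by
induction on `h`. As the identity of a product is analysable, precomposing it with the atomic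
factors of an elementary morphism one at a time gives (ii) and (iii); (i) holds because every
atomic morphism has a product as its target.
-/

open CategoryTheory

namespace LDCoherence

universe v u v₁ u₁ v₂ u₂

variable {C : Type u} [Category.{v} C]

variable {Cc : Type u₁} [Category.{v₁} Cc] {Dd : Type u₂} [Category.{v₂} Dd]
  {LC : LD Cc} {LDd : LD Dd}

lemma inv_comp_eq_comp_inv_of_comp_eq {X Y Z W : C} {i : X ⟶ Y} {k : W ⟶ Z} [IsIso i] [IsIso k]
    {x : Y ⟶ Z} {y : X ⟶ W} (h : i ≫ x = y ≫ k) : inv i ≫ y = x ≫ inv k := by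
  rw [IsIso.inv_comp_eq, ← Category.assoc, IsIso.eq_comp_inv, h]

namespace LD

variable (L : LD C)

lemma otHom_id_comp {A X Y Z : C} (f : X ⟶ Y) (g : Y ⟶ Z) :
    L.otHom (𝟙 A) (f ≫ g) = L.otHom (𝟙 A) f ≫ L.otHom (𝟙 A) g := by
  rw [← L.otHom_comp, Category.id_comp]

lemma otHom_comp_id {A X Y Z : C} (f : X ⟶ Y) (g : Y ⟶ Z) :
    L.otHom (f ≫ g) (𝟙 A) = L.otHom f (𝟙 A) ≫ L.otHom g (𝟙 A) := by
  rw [← L.otHom_comp, Category.id_comp]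

lemma paHom_id_comp {A X Y Z : C} (f : X ⟶ Y) (g : Y ⟶ Z) :
    L.paHom (𝟙 A) (f ≫ g) = L.paHom (𝟙 A) f ≫ L.paHom (𝟙 A) g := by
  rw [← L.paHom_comp, Category.id_comp]

lemma paHom_comp_id {A X Y Z : C} (f : X ⟶ Y) (g : Y ⟶ Z) :
    L.paHom (f ≫ g) (𝟙 A) = L.paHom f (𝟙 A) ≫ L.paHom g (𝟙 A) := by
  rw [← L.paHom_comp, Category.id_comp]

lemma otHom_exchange {X Y X' Y' : C} (f : X ⟶ Y) (g : X' ⟶ Y') :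
    L.otHom f (𝟙 X') ≫ L.otHom (𝟙 Y) g = L.otHom (𝟙 X) g ≫ L.otHom f (𝟙 Y') := by
  rw [← L.otHom_comp, ← L.otHom_comp, Category.id_comp, Category.comp_id, Category.id_comp,
    Category.comp_id]

lemma paHom_exchange {X Y X' Y' : C} (f : X ⟶ Y) (g : X' ⟶ Y') :
    L.paHom f (𝟙 X') ≫ L.paHom (𝟙 Y) g = L.paHom (𝟙 X) g ≫ L.paHom f (𝟙 Y') := by
  rw [← L.paHom_comp, ← L.paHom_comp, Category.id_comp, Category.comp_id, Category.id_comp,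
    Category.comp_id]

instance {X₁ Y₁ X₂ Y₂ : C} (f : X₁ ⟶ Y₁) (g : X₂ ⟶ Y₂) [IsIso f] [IsIso g] :
    IsIso (L.otHom f g) :=
  ⟨⟨L.otHom (inv f) (inv g), by simp [← L.otHom_comp, L.otHom_id],
    by simp [← L.otHom_comp, L.otHom_id]⟩⟩

instance {X₁ Y₁ X₂ Y₂ : C} (f : X₁ ⟶ Y₁) (g : X₂ ⟶ Y₂) [IsIso f] [IsIso g] :
    IsIso (L.paHom f g) :=
  ⟨⟨L.paHom (inv f) (inv g), by simp [← L.paHom_comp, L.paHom_id],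
    by simp [← L.paHom_comp, L.paHom_id]⟩⟩

instance (A B E : C) : IsIso (L.α A B E) := ⟨⟨L.αInv A B E, L.α_αInv A B E, L.αInv_α A B E⟩⟩

instance (A B E : C) : IsIso (L.pα A B E) :=
  ⟨⟨L.pαInv A B E, L.pα_pαInv A B E, L.pαInv_pα A B E⟩⟩

instance (A B E : C) : IsIso (L.αInv A B E) := ⟨⟨L.α A B E, L.αInv_α A B E, L.α_αInv A B E⟩⟩

instance (A B E : C) : IsIso (L.pαInv A B E) :=
  ⟨⟨L.pα A B E, L.pαInv_pα A B E, L.pα_pαInv A B E⟩⟩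

@[simp]
lemma inv_otHom {X₁ Y₁ X₂ Y₂ : C} (f : X₁ ⟶ Y₁) (g : X₂ ⟶ Y₂) [IsIso f] [IsIso g] :
    inv (L.otHom f g) = L.otHom (inv f) (inv g) :=
  IsIso.inv_eq_of_hom_inv_id (by simp [← L.otHom_comp, L.otHom_id])

@[simp]
lemma inv_paHom {X₁ Y₁ X₂ Y₂ : C} (f : X₁ ⟶ Y₁) (g : X₂ ⟶ Y₂) [IsIso f] [IsIso g] :
    inv (L.paHom f g) = L.paHom (inv f) (inv g) :=
  IsIso.inv_eq_of_hom_inv_id (by simp [← L.paHom_comp, L.paHom_id])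

@[simp]
lemma inv_α (A B E : C) : inv (L.α A B E) = L.αInv A B E :=
  IsIso.inv_eq_of_hom_inv_id (L.α_αInv A B E)

@[simp]
lemma inv_αInv (A B E : C) : inv (L.αInv A B E) = L.α A B E :=
  IsIso.inv_eq_of_hom_inv_id (L.αInv_α A B E)

@[simp]
lemma inv_pα (A B E : C) : inv (L.pα A B E) = L.pαInv A B E :=
  IsIso.inv_eq_of_hom_inv_id (L.pα_pαInv A B E)

@[simp]
lemma inv_pαInv (A B E : C) : inv (L.pαInv A B E) = L.pα A B E :=
  IsIso.inv_eq_of_hom_inv_id (L.pαInv_pα A B E)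

lemma αInv_natural {A A' B B' E E' : C} (f : A ⟶ A') (g : B ⟶ B') (h : E ⟶ E') :
    L.otHom (L.otHom f g) h ≫ L.αInv A' B' E' = L.αInv A B E ≫ L.otHom f (L.otHom g h) := by
  simpa using (inv_comp_eq_comp_inv_of_comp_eq (L.α_natural f g h).symm).symm

lemma pαInv_natural {A A' B B' E E' : C} (f : A ⟶ A') (g : B ⟶ B') (h : E ⟶ E') :
    L.paHom (L.paHom f g) h ≫ L.pαInv A' B' E' = L.pαInv A B E ≫ L.paHom f (L.paHom g h) := by
  simpa using (inv_comp_eq_comp_inv_of_comp_eq (L.pα_natural f g h).symm).symm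

lemma P1_inv (A B E D : C) :
    L.αInv (L.ot A B) E D ≫ L.αInv A B (L.ot E D) =
      L.otHom (L.αInv A B E) (𝟙 D) ≫ L.αInv A (L.ot B E) D ≫
        L.otHom (𝟙 A) (L.αInv B E D) := by
  simpa using IsIso.inv_eq_inv.2 (L.P1 A B E D)

lemma P1_comp_αInv (A B E D : C) :
    L.α A (L.ot B E) D ≫ L.otHom (L.α A B E) (𝟙 D) ≫ L.αInv (L.ot A B) E D =
      L.otHom (𝟙 A) (L.αInv B E D) ≫ L.α A B (L.ot E D) := by
  simpa using (inv_comp_eq_comp_inv_of_comp_eq (L.P1 A B E D).symm).symm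

lemma P8_inv (A B E D : C) :
    L.pαInv (L.pa A B) E D ≫ L.pαInv A B (L.pa E D) =
      L.paHom (L.pαInv A B E) (𝟙 D) ≫ L.pαInv A (L.pa B E) D ≫
        L.paHom (𝟙 A) (L.pαInv B E D) := by
  simpa using IsIso.inv_eq_inv.2 (L.P8 A B E D)

lemma P8_comp_pαInv (A B E D : C) :
    L.pα A (L.pa B E) D ≫ L.paHom (L.pα A B E) (𝟙 D) ≫ L.pαInv (L.pa A B) E D =
      L.paHom (𝟙 A) (L.pαInv B E D) ≫ L.pα A B (L.pa E D) := by
  simpa using (inv_comp_eq_comp_inv_of_comp_eq (L.P8 A B E D).symm).symm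

lemma P4_comp_pαInv (A B E D : C) :
    L.δl A (L.pa B E) D ≫ L.paHom (L.δl A B E) (𝟙 D) ≫ L.pαInv (L.ot A B) E D =
      L.otHom (𝟙 A) (L.pαInv B E D) ≫ L.δl A B (L.pa E D) := by
  simpa using (inv_comp_eq_comp_inv_of_comp_eq (L.P4 A B E D).symm).symm

lemma P6_comp_pαInv (A B E D : C) :
    L.δl (L.pa A B) E D ≫ L.paHom (L.δr A B E) (𝟙 D) ≫ L.pαInv A (L.ot B E) D =
      L.δr A B (L.pa E D) ≫ L.paHom (𝟙 A) (L.δl B E D) := by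
  rw [reassoc_of% (L.P6 A B E D), L.pα_pαInv, Category.comp_id]

lemma P7_comp_pαInv (A B E D : C) :
    L.δr (L.pa A B) E D ≫ L.pαInv A B (L.ot E D) =
      L.otHom (L.pαInv A B E) (𝟙 D) ≫ L.δr A (L.pa B E) D ≫ L.paHom (𝟙 A) (L.δr B E D) := by
  have h : L.δr (L.pa A B) E D ≫ L.pαInv A B (L.ot E D) =
      inv (L.otHom (L.pα A B E) (𝟙 D)) ≫ L.δr A (L.pa B E) D ≫ L.paHom (𝟙 A) (L.δr B E D) :=
    (IsIso.eq_inv_comp _).2 (by rw [reassoc_of% (L.P7 A B E D), L.pα_pαInv, Category.comp_id])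
  simpa using h

end LD

namespace LD.Tidy

variable {L : LD C}

lemma ot_inj (hL : L.Tidy) {A B A' B' : C} (e : L.ot A B = L.ot A' B') : A = A' ∧ B = B' :=
  hL.1 _ _ _ _ e

lemma pa_inj (hL : L.Tidy) {A B A' B' : C} (e : L.pa A B = L.pa A' B') : A = A' ∧ B = B' :=
  hL.2.1 _ _ _ _ e

lemma ot_ne_pa (hL : L.Tidy) {A B A' B' : C} : L.ot A B ≠ L.pa A' B' := hL.2.2 _ _ _ _

end LD.Tidy

section Tau

variable (L : LD C) {X Y Z : C} (f : X ⟶ L.ot Y Z)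

lemma α_comp_tau_a (A B : C) (w : YW C) :
    L.α A B (Hot L X w) ≫ tau L f (.a (L.ot A B) w) =
      tau L f (.a A (.a B w)) ≫ L.otHom (L.α A B (Lot L Y w)) (𝟙 _) := by
  dsimp only [tau, Hot, Lot, Rot]
  simp only [L.otHom_id_comp, Category.assoc, ← L.P1]
  rw [← L.otHom_id, ← reassoc_of% L.α_natural]

lemma αInv_comp_tau_a_a (A B : C) (w : YW C) :
    L.αInv A B (Hot L X w) ≫ tau L f (.a A (.a B w)) =
      tau L f (.a (L.ot A B) w) ≫ L.otHom (L.αInv A B (Lot L Y w)) (𝟙 _) := by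
  have h := α_comp_tau_a L f A B w
  -- normalising the objects lets instance search see that the whiskered `α` is an isomorphism
  dsimp only [Hot, Lot, Rot] at h ⊢
  simpa using inv_comp_eq_comp_inv_of_comp_eq h

lemma α_comp_tau_ainv_a (A E : C) (w : YW C) :
    L.α A (Hot L X w) E ≫ tau L f (.ainv E (.a A w)) = tau L f (.a A (.ainv E w)) := by
  dsimp only [tau, Hot, Lot, Rot]
  simp only [L.otHom_id_comp, L.otHom_comp_id, Category.assoc]
  rw [← reassoc_of% L.α_natural, L.P1_comp_αInv]

lemma αInv_comp_tau_a_ainv (A E : C) (w : YW C) :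
    L.αInv A (Hot L X w) E ≫ tau L f (.a A (.ainv E w)) = tau L f (.ainv E (.a A w)) := by
  rw [← L.inv_α]
  exact (IsIso.inv_comp_eq _).2 (α_comp_tau_ainv_a L f A E w).symm

lemma αInv_comp_tau_ainv (B E : C) (w : YW C) :
    L.αInv (Hot L X w) B E ≫ tau L f (.ainv (L.ot B E) w) =
      tau L f (.ainv E (.ainv B w)) ≫ L.otHom (𝟙 _) (L.αInv (Rot L Z w) B E) := by
  dsimp only [tau, Hot, Lot, Rot]
  simp only [L.otHom_comp_id, Category.assoc]
  rw [← L.otHom_id, ← reassoc_of% L.αInv_natural, L.P1_inv]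

lemma α_comp_tau_ainv_ainv (B E : C) (w : YW C) :
    L.α (Hot L X w) B E ≫ tau L f (.ainv E (.ainv B w)) =
      tau L f (.ainv (L.ot B E) w) ≫ L.otHom (𝟙 _) (L.α (Rot L Z w) B E) := by
  have h := αInv_comp_tau_ainv L f B E w
  dsimp only [Hot, Lot, Rot] at h ⊢
  simpa using inv_comp_eq_comp_inv_of_comp_eq h

lemma otHom_comp_tau_a {A A' : C} (k : A ⟶ A') (w : YW C) :
    L.otHom k (𝟙 (Hot L X w)) ≫ tau L f (.a A' w) =
      tau L f (.a A w) ≫ L.otHom (L.otHom k (𝟙 _)) (𝟙 _) := by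
  dsimp only [tau, Hot, Lot, Rot]
  simp only [Category.assoc]
  rw [reassoc_of% (L.otHom_exchange k (tau L f w)), ← L.otHom_id, L.α_natural]

lemma otHom_comp_tau_ainv {A A' : C} (k : A ⟶ A') (w : YW C) :
    L.otHom (𝟙 (Hot L X w)) k ≫ tau L f (.ainv A' w) =
      tau L f (.ainv A w) ≫ L.otHom (𝟙 _) (L.otHom (𝟙 _) k) := by
  dsimp only [tau, Hot, Lot, Rot]
  simp only [Category.assoc]
  rw [← reassoc_of% (L.otHom_exchange (tau L f w) k), ← L.otHom_id, L.αInv_natural]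

end Tau

section Kappa

variable (L : LD C) {X Y Z : C} (f : X ⟶ L.pa Y Z)

lemma pα_comp_kappa_pa (A B : C) (w : ZW C) :
    L.pα A B (Hpa L X w) ≫ kappa L f (.pa (L.pa A B) w) =
      kappa L f (.pa A (.pa B w)) ≫ L.paHom (L.pα A B (Lpa L Y w)) (𝟙 _) := by
  dsimp only [kappa, Hpa, Lpa, Rpa]
  simp only [L.paHom_id_comp, Category.assoc, ← L.P8]
  rw [← L.paHom_id, ← reassoc_of% L.pα_natural]

lemma pαInv_comp_kappa_pa_pa (A B : C) (w : ZW C) :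
    L.pαInv A B (Hpa L X w) ≫ kappa L f (.pa A (.pa B w)) =
      kappa L f (.pa (L.pa A B) w) ≫ L.paHom (L.pαInv A B (Lpa L Y w)) (𝟙 _) := by
  have h := pα_comp_kappa_pa L f A B w
  dsimp only [Hpa, Lpa, Rpa] at h ⊢
  simpa using inv_comp_eq_comp_inv_of_comp_eq h

lemma pα_comp_kappa_painv_pa (A E : C) (w : ZW C) :
    L.pα A (Hpa L X w) E ≫ kappa L f (.painv E (.pa A w)) = kappa L f (.pa A (.painv E w)) := by
  dsimp only [kappa, Hpa, Lpa, Rpa]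
  simp only [L.paHom_id_comp, L.paHom_comp_id, Category.assoc]
  rw [← reassoc_of% L.pα_natural, L.P8_comp_pαInv]

lemma pαInv_comp_kappa_pa_painv (A E : C) (w : ZW C) :
    L.pαInv A (Hpa L X w) E ≫ kappa L f (.pa A (.painv E w)) =
      kappa L f (.painv E (.pa A w)) := by
  rw [← L.inv_pα]
  exact (IsIso.inv_comp_eq _).2 (pα_comp_kappa_painv_pa L f A E w).symm

lemma pαInv_comp_kappa_painv (B E : C) (w : ZW C) :
    L.pαInv (Hpa L X w) B E ≫ kappa L f (.painv (L.pa B E) w) =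
      kappa L f (.painv E (.painv B w)) ≫ L.paHom (𝟙 _) (L.pαInv (Rpa L Z w) B E) := by
  dsimp only [kappa, Hpa, Lpa, Rpa]
  simp only [L.paHom_comp_id, Category.assoc]
  rw [← L.paHom_id, ← reassoc_of% L.pαInv_natural, L.P8_inv]

lemma pα_comp_kappa_painv_painv (B E : C) (w : ZW C) :
    L.pα (Hpa L X w) B E ≫ kappa L f (.painv E (.painv B w)) =
      kappa L f (.painv (L.pa B E) w) ≫ L.paHom (𝟙 _) (L.pα (Rpa L Z w) B E) := by
  have h := pαInv_comp_kappa_painv L f B E w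
  dsimp only [Hpa, Lpa, Rpa] at h ⊢
  simpa using inv_comp_eq_comp_inv_of_comp_eq h

lemma δl_comp_kappa_pa (A B : C) (w : ZW C) :
    L.δl A B (Hpa L X w) ≫ kappa L f (.pa (L.ot A B) w) =
      kappa L f (.dl A (.pa B w)) ≫ L.paHom (L.δl A B (Lpa L Y w)) (𝟙 _) := by
  dsimp only [kappa, Hpa, Lpa, Rpa]
  simp only [L.otHom_id_comp, Category.assoc, ← L.P4]
  rw [← L.otHom_id, ← reassoc_of% L.δl_natural]

lemma δl_comp_kappa_painv_dl (A E : C) (w : ZW C) :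
    L.δl A (Hpa L X w) E ≫ kappa L f (.painv E (.dl A w)) = kappa L f (.dl A (.painv E w)) := by
  dsimp only [kappa, Hpa, Lpa, Rpa]
  simp only [L.otHom_id_comp, L.paHom_comp_id, Category.assoc]
  rw [← reassoc_of% L.δl_natural, L.P4_comp_pαInv]

lemma δl_comp_kappa_painv_dr (B E : C) (w : ZW C) :
    L.δl (Hpa L X w) B E ≫ kappa L f (.painv E (.dr B w)) =
      kappa L f (.dr (L.pa B E) w) ≫ L.paHom (𝟙 _) (L.δl (Rpa L Z w) B E) := by
  dsimp only [kappa, Hpa, Lpa, Rpa]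
  simp only [L.paHom_comp_id, Category.assoc]
  rw [← L.paHom_id, ← reassoc_of% L.δl_natural, L.P6_comp_pαInv]

lemma δr_comp_kappa_pa_dl (A B : C) (w : ZW C) :
    L.δr A B (Hpa L X w) ≫ kappa L f (.pa A (.dl B w)) =
      kappa L f (.dl (L.pa A B) w) ≫ L.paHom (L.δr A B (Lpa L Y w)) (𝟙 _) := by
  dsimp only [kappa, Hpa, Lpa, Rpa]
  simp only [L.paHom_id_comp, Category.assoc, L.P6]
  rw [← L.paHom_id, ← reassoc_of% L.δr_natural]

lemma δr_comp_kappa_pa_dr (A E : C) (w : ZW C) :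
    L.δr A (Hpa L X w) E ≫ kappa L f (.pa A (.dr E w)) = kappa L f (.dr E (.pa A w)) := by
  dsimp only [kappa, Hpa, Lpa, Rpa]
  simp only [L.paHom_id_comp, L.otHom_comp_id, Category.assoc]
  rw [← reassoc_of% L.δr_natural, ← L.P7]

lemma δr_comp_kappa_painv (B E : C) (w : ZW C) :
    L.δr (Hpa L X w) B E ≫ kappa L f (.painv (L.ot B E) w) =
      kappa L f (.dr E (.painv B w)) ≫ L.paHom (𝟙 _) (L.δr (Rpa L Z w) B E) := by
  dsimp only [kappa, Hpa, Lpa, Rpa]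
  simp only [L.otHom_comp_id, Category.assoc]
  rw [← L.otHom_id, ← reassoc_of% L.δr_natural, L.P7_comp_pαInv]

lemma α_comp_kappa_dl (A B : C) (w : ZW C) :
    L.α A B (Hpa L X w) ≫ kappa L f (.dl (L.ot A B) w) =
      kappa L f (.dl A (.dl B w)) ≫ L.paHom (L.α A B (Lpa L Y w)) (𝟙 _) := by
  dsimp only [kappa, Hpa, Lpa, Rpa]
  simp only [L.otHom_id_comp, Category.assoc, ← L.P2]
  rw [← L.otHom_id, ← reassoc_of% L.α_natural]

lemma αInv_comp_kappa_dl_dl (A B : C) (w : ZW C) :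
    L.αInv A B (Hpa L X w) ≫ kappa L f (.dl A (.dl B w)) =
      kappa L f (.dl (L.ot A B) w) ≫ L.paHom (L.αInv A B (Lpa L Y w)) (𝟙 _) := by
  have h := α_comp_kappa_dl L f A B w
  dsimp only [Hpa, Lpa, Rpa] at h ⊢
  simpa using inv_comp_eq_comp_inv_of_comp_eq h

lemma α_comp_kappa_dr_dl (A E : C) (w : ZW C) :
    L.α A (Hpa L X w) E ≫ kappa L f (.dr E (.dl A w)) = kappa L f (.dl A (.dr E w)) := by
  dsimp only [kappa, Hpa, Lpa, Rpa]
  simp only [L.otHom_id_comp, L.otHom_comp_id, Category.assoc]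
  rw [← reassoc_of% L.α_natural, ← L.P3]

lemma αInv_comp_kappa_dl_dr (A E : C) (w : ZW C) :
    L.αInv A (Hpa L X w) E ≫ kappa L f (.dl A (.dr E w)) = kappa L f (.dr E (.dl A w)) := by
  rw [← L.inv_α]
  exact (IsIso.inv_comp_eq _).2 (α_comp_kappa_dr_dl L f A E w).symm

lemma α_comp_kappa_dr_dr (B E : C) (w : ZW C) :
    L.α (Hpa L X w) B E ≫ kappa L f (.dr E (.dr B w)) =
      kappa L f (.dr (L.ot B E) w) ≫ L.paHom (𝟙 _) (L.α (Rpa L Z w) B E) := by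
  dsimp only [kappa, Hpa, Lpa, Rpa]
  simp only [L.otHom_comp_id, Category.assoc, L.P5]
  rw [← L.otHom_id, ← reassoc_of% L.α_natural]

lemma αInv_comp_kappa_dr (B E : C) (w : ZW C) :
    L.αInv (Hpa L X w) B E ≫ kappa L f (.dr (L.ot B E) w) =
      kappa L f (.dr E (.dr B w)) ≫ L.paHom (𝟙 _) (L.αInv (Rpa L Z w) B E) := by
  have h := α_comp_kappa_dr_dr L f B E w
  dsimp only [Hpa, Lpa, Rpa] at h ⊢
  simpa using inv_comp_eq_comp_inv_of_comp_eq h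

lemma paHom_comp_kappa_pa {A A' : C} (k : A ⟶ A') (w : ZW C) :
    L.paHom k (𝟙 (Hpa L X w)) ≫ kappa L f (.pa A' w) =
      kappa L f (.pa A w) ≫ L.paHom (L.paHom k (𝟙 _)) (𝟙 _) := by
  dsimp only [kappa, Hpa, Lpa, Rpa]
  simp only [Category.assoc]
  rw [reassoc_of% (L.paHom_exchange k (kappa L f w)), ← L.paHom_id, L.pα_natural]

lemma paHom_comp_kappa_painv {A A' : C} (k : A ⟶ A') (w : ZW C) :
    L.paHom (𝟙 (Hpa L X w)) k ≫ kappa L f (.painv A' w) =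
      kappa L f (.painv A w) ≫ L.paHom (𝟙 _) (L.paHom (𝟙 _) k) := by
  dsimp only [kappa, Hpa, Lpa, Rpa]
  simp only [Category.assoc]
  rw [← reassoc_of% (L.paHom_exchange (kappa L f w) k), ← L.paHom_id, L.pαInv_natural]

lemma otHom_comp_kappa_dl {A A' : C} (k : A ⟶ A') (w : ZW C) :
    L.otHom k (𝟙 (Hpa L X w)) ≫ kappa L f (.dl A' w) =
      kappa L f (.dl A w) ≫ L.paHom (L.otHom k (𝟙 _)) (𝟙 _) := by
  dsimp only [kappa, Hpa, Lpa, Rpa]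
  simp only [Category.assoc]
  rw [reassoc_of% (L.otHom_exchange k (kappa L f w)), ← L.paHom_id, L.δl_natural]

lemma otHom_comp_kappa_dr {A A' : C} (k : A ⟶ A') (w : ZW C) :
    L.otHom (𝟙 (Hpa L X w)) k ≫ kappa L f (.dr A' w) =
      kappa L f (.dr A w) ≫ L.paHom (𝟙 _) (L.otHom (𝟙 _) k) := by
  dsimp only [kappa, Hpa, Lpa, Rpa]
  simp only [Category.assoc]
  rw [← reassoc_of% (L.otHom_exchange (kappa L f w) k), ← L.paHom_id, L.δr_natural]

end Kappa

section Analysable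

variable {L : LD C}

lemma otAnalysable_of_eq {Y Z Q₁ Q₂ : C} (w : YW C) (g' : Lot L Y w ⟶ Q₁)
    (g'' : Rot L Z w ⟶ Q₂) {f : Hot L (L.ot Y Z) w ⟶ L.ot Q₁ Q₂}
    (hf : f = tau L (𝟙 _) w ≫ L.otHom g' g'') : OtAnalysable L (IdOtSet L) f :=
  ⟨_, Y, Z, 𝟙 _, ⟨rfl, rfl⟩, w, Q₁, Q₂, g', g'', rfl, rfl, by simp [hf]⟩

lemma otAnalysable_tau {Y Z : C} (w : YW C)
    {f : Hot L (L.ot Y Z) w ⟶ L.ot (Lot L Y w) (Rot L Z w)}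
    (hf : f = tau L (𝟙 _) w) : OtAnalysable L (IdOtSet L) f :=
  otAnalysable_of_eq w (𝟙 _) (𝟙 _) (by rw [hf, L.otHom_id, Category.comp_id])

lemma otAnalysable_id (A B : C) : OtAnalysable L (IdOtSet L) (𝟙 (L.ot A B)) :=
  otAnalysable_tau .nil rfl

-- For `e` between definitionally equal objects such as `Hot L X (.a A w)` and
-- `L.ot A (Hot L X w)`, where rewriting with `eqToHom_refl` does not apply.
lemma OtAnalysable.eqToHom_comp {W X Z : C} {h : W ⟶ X} {k : X ⟶ Z} (e : X = X)
    (hk : OtAnalysable L (IdOtSet L) (h ≫ k)) :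
    OtAnalysable L (IdOtSet L) (h ≫ eqToHom e ≫ k) := by
  rwa [eqToHom_refl, Category.id_comp]

lemma OtAnalysable.exists_eq (hL : L.Tidy) {P Q₁ Q₂ : C} {g : P ⟶ L.ot Q₁ Q₂}
    (hg : OtAnalysable L (IdOtSet L) g) :
    ∃ (Y Z : C) (w : YW C) (hP : P = Hot L (L.ot Y Z) w) (g' : Lot L Y w ⟶ Q₁)
      (g'' : Rot L Z w ⟶ Q₂), g = eqToHom hP ≫ tau L (𝟙 _) w ≫ L.otHom g' g'' := by
  obtain ⟨_, Y, Z, _, ⟨rfl, rfl⟩, w, Q₁', Q₂', g', g'', hP, hT, rfl⟩ := hg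
  obtain ⟨rfl, rfl⟩ := hL.ot_inj hT
  exact ⟨Y, Z, w, hP, g', g'', by simp⟩

lemma OtAnalysable.comp_otHom (hL : L.Tidy) {P Q₁ Q₂ Q₁' Q₂' : C} {g : P ⟶ L.ot Q₁ Q₂}
    (hg : OtAnalysable L (IdOtSet L) g) (k₁ : Q₁ ⟶ Q₁') (k₂ : Q₂ ⟶ Q₂') :
    OtAnalysable L (IdOtSet L) (g ≫ L.otHom k₁ k₂) := by
  obtain ⟨Y, Z, w, rfl, g', g'', rfl⟩ := hg.exists_eq hL
  exact otAnalysable_of_eq w (g' ≫ k₁) (g'' ≫ k₂) (by simp [L.otHom_comp])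

lemma OtAnalysable.otHom_id_comp_α (hL : L.Tidy) {P Q₁ Q₂ : C} {g : P ⟶ L.ot Q₁ Q₂}
    (hg : OtAnalysable L (IdOtSet L) g) (A : C) :
    OtAnalysable L (IdOtSet L) (L.otHom (𝟙 A) g ≫ L.α A Q₁ Q₂) := by
  obtain ⟨Y, Z, w, rfl, g', g'', rfl⟩ := hg.exists_eq hL
  refine otAnalysable_of_eq (.a A w) (L.otHom (𝟙 A) g') g'' ?_
  dsimp only [tau, Hot, Lot, Rot]
  simp [L.otHom_id_comp, L.α_natural]

lemma OtAnalysable.otHom_comp_αInv (hL : L.Tidy) {P Q₁ Q₂ : C} {g : P ⟶ L.ot Q₁ Q₂}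
    (hg : OtAnalysable L (IdOtSet L) g) (A : C) :
    OtAnalysable L (IdOtSet L) (L.otHom g (𝟙 A) ≫ L.αInv Q₁ Q₂ A) := by
  obtain ⟨Y, Z, w, rfl, g', g'', rfl⟩ := hg.exists_eq hL
  refine otAnalysable_of_eq (.ainv A w) g' (L.otHom g'' (𝟙 A)) ?_
  dsimp only [tau, Hot, Lot, Rot]
  simp [L.otHom_comp_id, L.αInv_natural]

lemma paAnalysable_of_eq {Y Z Q₁ Q₂ : C} (w : ZW C) (g' : Lpa L Y w ⟶ Q₁)
    (g'' : Rpa L Z w ⟶ Q₂) {f : Hpa L (L.pa Y Z) w ⟶ L.pa Q₁ Q₂}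
    (hf : f = kappa L (𝟙 _) w ≫ L.paHom g' g'') : PaAnalysable L (IdPaSet L) f :=
  ⟨_, Y, Z, 𝟙 _, ⟨rfl, rfl⟩, w, Q₁, Q₂, g', g'', rfl, rfl, by simp [hf]⟩

lemma paAnalysable_kappa {Y Z : C} (w : ZW C)
    {f : Hpa L (L.pa Y Z) w ⟶ L.pa (Lpa L Y w) (Rpa L Z w)} (hf : f = kappa L (𝟙 _) w) :
    PaAnalysable L (IdPaSet L) f :=
  paAnalysable_of_eq w (𝟙 _) (𝟙 _) (by rw [hf, L.paHom_id, Category.comp_id])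

lemma paAnalysable_id (A B : C) : PaAnalysable L (IdPaSet L) (𝟙 (L.pa A B)) :=
  paAnalysable_kappa .nil rfl

lemma PaAnalysable.eqToHom_comp {W X Z : C} {h : W ⟶ X} {k : X ⟶ Z} (e : X = X)
    (hk : PaAnalysable L (IdPaSet L) (h ≫ k)) :
    PaAnalysable L (IdPaSet L) (h ≫ eqToHom e ≫ k) := by
  rwa [eqToHom_refl, Category.id_comp]

lemma PaAnalysable.exists_eq (hL : L.Tidy) {P Q₁ Q₂ : C} {g : P ⟶ L.pa Q₁ Q₂}
    (hg : PaAnalysable L (IdPaSet L) g) :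
    ∃ (Y Z : C) (w : ZW C) (hP : P = Hpa L (L.pa Y Z) w) (g' : Lpa L Y w ⟶ Q₁)
      (g'' : Rpa L Z w ⟶ Q₂), g = eqToHom hP ≫ kappa L (𝟙 _) w ≫ L.paHom g' g'' := by
  obtain ⟨_, Y, Z, _, ⟨rfl, rfl⟩, w, Q₁', Q₂', g', g'', hP, hT, rfl⟩ := hg
  obtain ⟨rfl, rfl⟩ := hL.pa_inj hT
  exact ⟨Y, Z, w, hP, g', g'', by simp⟩

lemma PaAnalysable.comp_paHom (hL : L.Tidy) {P Q₁ Q₂ Q₁' Q₂' : C} {g : P ⟶ L.pa Q₁ Q₂}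
    (hg : PaAnalysable L (IdPaSet L) g) (k₁ : Q₁ ⟶ Q₁') (k₂ : Q₂ ⟶ Q₂') :
    PaAnalysable L (IdPaSet L) (g ≫ L.paHom k₁ k₂) := by
  obtain ⟨Y, Z, w, rfl, g', g'', rfl⟩ := hg.exists_eq hL
  exact paAnalysable_of_eq w (g' ≫ k₁) (g'' ≫ k₂) (by simp [L.paHom_comp])

lemma PaAnalysable.paHom_id_comp_pα (hL : L.Tidy) {P Q₁ Q₂ : C} {g : P ⟶ L.pa Q₁ Q₂}
    (hg : PaAnalysable L (IdPaSet L) g) (A : C) :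
    PaAnalysable L (IdPaSet L) (L.paHom (𝟙 A) g ≫ L.pα A Q₁ Q₂) := by
  obtain ⟨Y, Z, w, rfl, g', g'', rfl⟩ := hg.exists_eq hL
  refine paAnalysable_of_eq (.pa A w) (L.paHom (𝟙 A) g') g'' ?_
  dsimp only [kappa, Hpa, Lpa, Rpa]
  simp [L.paHom_id_comp, L.pα_natural]

lemma PaAnalysable.paHom_comp_pαInv (hL : L.Tidy) {P Q₁ Q₂ : C} {g : P ⟶ L.pa Q₁ Q₂}
    (hg : PaAnalysable L (IdPaSet L) g) (A : C) :
    PaAnalysable L (IdPaSet L) (L.paHom g (𝟙 A) ≫ L.pαInv Q₁ Q₂ A) := by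
  obtain ⟨Y, Z, w, rfl, g', g'', rfl⟩ := hg.exists_eq hL
  refine paAnalysable_of_eq (.painv A w) g' (L.paHom g'' (𝟙 A)) ?_
  dsimp only [kappa, Hpa, Lpa, Rpa]
  simp [L.paHom_comp_id, L.pαInv_natural]

lemma PaAnalysable.otHom_id_comp_δl (hL : L.Tidy) {P Q₁ Q₂ : C} {g : P ⟶ L.pa Q₁ Q₂}
    (hg : PaAnalysable L (IdPaSet L) g) (A : C) :
    PaAnalysable L (IdPaSet L) (L.otHom (𝟙 A) g ≫ L.δl A Q₁ Q₂) := by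
  obtain ⟨Y, Z, w, rfl, g', g'', rfl⟩ := hg.exists_eq hL
  refine paAnalysable_of_eq (.dl A w) (L.otHom (𝟙 A) g') g'' ?_
  dsimp only [kappa, Hpa, Lpa, Rpa]
  simp [L.otHom_id_comp, L.δl_natural]

lemma PaAnalysable.otHom_comp_δr (hL : L.Tidy) {P Q₁ Q₂ : C} {g : P ⟶ L.pa Q₁ Q₂}
    (hg : PaAnalysable L (IdPaSet L) g) (A : C) :
    PaAnalysable L (IdPaSet L) (L.otHom g (𝟙 A) ≫ L.δr Q₁ Q₂ A) := by
  obtain ⟨Y, Z, w, rfl, g', g'', rfl⟩ := hg.exists_eq hL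
  refine paAnalysable_of_eq (.dr A w) g' (L.otHom g'' (𝟙 A)) ?_
  dsimp only [kappa, Hpa, Lpa, Rpa]
  simp [L.otHom_comp_id, L.δr_natural]

end Analysable

/-- Quantifying over the equation `e`, instead of asking `h` to land in `Hot L (L.ot Y Z) w`,
makes this provable by induction on `Atomic`. -/
def TauAnalysable (L : LD C) {W T : C} (h : W ⟶ T) : Prop :=
  ∀ ⦃Y Z : C⦄ (w : YW C) (e : T = Hot L (L.ot Y Z) w),
    OtAnalysable L (IdOtSet L) (h ≫ eqToHom e ≫ tau L (𝟙 (L.ot Y Z)) w)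

def KappaAnalysable (L : LD C) {W T : C} (h : W ⟶ T) : Prop :=
  ∀ ⦃Y Z : C⦄ (w : ZW C) (e : T = Hpa L (L.pa Y Z) w),
    PaAnalysable L (IdPaSet L) (h ≫ eqToHom e ≫ kappa L (𝟙 (L.pa Y Z)) w)

lemma exists_Hot_eq_ot (L : LD C) (Y Z : C) (w : YW C) :
    ∃ A B, Hot L (L.ot Y Z) w = L.ot A B := by
  cases w <;> exact ⟨_, _, rfl⟩

section AtomicAnalysable

variable {L : LD C}

lemma tauAnalysable_α (hL : L.Tidy) (A B E : C) : TauAnalysable L (L.α A B E) := by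
  intro Y Z w e
  cases w with
  | nil =>
    obtain ⟨rfl, rfl⟩ := hL.ot_inj e
    exact otAnalysable_tau (.a A .nil) (by dsimp [tau, Hot, Lot, Rot]; simp [L.otHom_id])
  | a A' w =>
    obtain ⟨rfl, rfl⟩ := hL.ot_inj e
    exact .eqToHom_comp e (otAnalysable_of_eq (.a A (.a B w)) _ (𝟙 _) (α_comp_tau_a L _ A B w))
  | ainv E' w =>
    obtain ⟨e', rfl⟩ := hL.ot_inj e
    cases w with
    | nil =>
      obtain ⟨rfl, rfl⟩ := hL.ot_inj e'
      exact otAnalysable_tau .nil (by dsimp [tau, Hot, Lot, Rot]; simp [L.otHom_id, L.α_αInv])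
    | a A' w =>
      obtain ⟨rfl, rfl⟩ := hL.ot_inj e'
      exact .eqToHom_comp e (otAnalysable_tau (.a A (.ainv E w)) (α_comp_tau_ainv_a L _ A E w))
    | ainv B' w =>
      obtain ⟨rfl, rfl⟩ := hL.ot_inj e'
      exact .eqToHom_comp e
        (otAnalysable_of_eq (.ainv (L.ot B E) w) (𝟙 _) _ (α_comp_tau_ainv_ainv L _ B E w))

lemma tauAnalysable_αInv (hL : L.Tidy) (A B E : C) : TauAnalysable L (L.αInv A B E) := by
  intro Y Z w e
  cases w with
  | nil =>
    obtain ⟨rfl, rfl⟩ := hL.ot_inj e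
    exact otAnalysable_tau (.ainv E .nil) (by dsimp [tau, Hot, Lot, Rot]; simp [L.otHom_id])
  | a A' w =>
    obtain ⟨rfl, e'⟩ := hL.ot_inj e
    cases w with
    | nil =>
      obtain ⟨rfl, rfl⟩ := hL.ot_inj e'
      exact otAnalysable_tau .nil (by dsimp [tau, Hot, Lot, Rot]; simp [L.otHom_id, L.αInv_α])
    | a B' w =>
      obtain ⟨rfl, rfl⟩ := hL.ot_inj e'
      exact .eqToHom_comp e
        (otAnalysable_of_eq (.a (L.ot A B) w) _ (𝟙 _) (αInv_comp_tau_a_a L _ A B w))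
    | ainv E' w =>
      obtain ⟨rfl, rfl⟩ := hL.ot_inj e'
      exact .eqToHom_comp e (otAnalysable_tau (.ainv E (.a A w)) (αInv_comp_tau_a_ainv L _ A E w))
  | ainv E' w =>
    obtain ⟨rfl, rfl⟩ := hL.ot_inj e
    exact .eqToHom_comp e
      (otAnalysable_of_eq (.ainv E (.ainv B w)) (𝟙 _) _ (αInv_comp_tau_ainv L _ B E w))

lemma TauAnalysable.otHom_id_left (hL : L.Tidy) {W T : C} {h : W ⟶ T}
    (hh : TauAnalysable L h) (A : C) :
    TauAnalysable L (L.otHom (𝟙 A) h) := by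
  intro Y Z w e
  cases w with
  | nil =>
    obtain ⟨rfl, rfl⟩ := hL.ot_inj e
    exact .eqToHom_comp e
      (otAnalysable_of_eq .nil (𝟙 _) h ((Category.comp_id _).trans (Category.id_comp _).symm))
  | a A' w =>
    obtain ⟨rfl, rfl⟩ := hL.ot_inj e
    refine .eqToHom_comp e ?_
    have := (hh w rfl).otHom_id_comp_α hL A
    rwa [eqToHom_refl, Category.id_comp, L.otHom_id_comp, Category.assoc] at this
  | ainv A' w =>
    obtain ⟨rfl, rfl⟩ := hL.ot_inj e
    exact .eqToHom_comp e
      (otAnalysable_of_eq (.ainv W w) (𝟙 _) _ (otHom_comp_tau_ainv L _ h w))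

lemma TauAnalysable.otHom_id_right (hL : L.Tidy) {W T : C} {h : W ⟶ T}
    (hh : TauAnalysable L h) (A : C) :
    TauAnalysable L (L.otHom h (𝟙 A)) := by
  intro Y Z w e
  cases w with
  | nil =>
    obtain ⟨rfl, rfl⟩ := hL.ot_inj e
    exact .eqToHom_comp e
      (otAnalysable_of_eq .nil h (𝟙 _) ((Category.comp_id _).trans (Category.id_comp _).symm))
  | a A' w =>
    obtain ⟨rfl, rfl⟩ := hL.ot_inj e
    exact .eqToHom_comp e (otAnalysable_of_eq (.a W w) _ (𝟙 _) (otHom_comp_tau_a L _ h w))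
  | ainv A' w =>
    obtain ⟨rfl, rfl⟩ := hL.ot_inj e
    refine .eqToHom_comp e ?_
    have := (hh w rfl).otHom_comp_αInv hL A
    rwa [eqToHom_refl, Category.id_comp, L.otHom_comp_id, Category.assoc] at this

lemma tauAnalysable_of_pa (hL : L.Tidy) {W A B : C} (h : W ⟶ L.pa A B) : TauAnalysable L h := by
  intro Y Z w e
  obtain ⟨P, Q, hPQ⟩ := exists_Hot_eq_ot L Y Z w
  exact (hL.ot_ne_pa (hPQ.symm.trans e.symm)).elim

lemma Atomic.tauAnalysable (hL : L.Tidy) {W T : C} {h : W ⟶ T} (hh : Atomic L h) :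
    TauAnalysable L h := by
  induction hh with
  | alpha A B E => exact tauAnalysable_α hL A B E
  | alphaInv A B E => exact tauAnalysable_αInv hL A B E
  | otLeftId h A _ ih => exact ih.otHom_id_left hL A
  | otRightId h A _ ih => exact ih.otHom_id_right hL A
  | palpha | palphaInv | dl | dr | paLeftId | paRightId => exact tauAnalysable_of_pa hL _

lemma kappaAnalysable_pα (hL : L.Tidy) (A B E : C) : KappaAnalysable L (L.pα A B E) := by
  intro Y Z w e
  cases w with
  | nil =>
    obtain ⟨rfl, rfl⟩ := hL.pa_inj e
    exact paAnalysable_kappa (.pa A .nil) (by dsimp [kappa, Hpa, Lpa, Rpa]; simp [L.paHom_id])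
  | pa A' w =>
    obtain ⟨rfl, rfl⟩ := hL.pa_inj e
    exact .eqToHom_comp e
      (paAnalysable_of_eq (.pa A (.pa B w)) _ (𝟙 _) (pα_comp_kappa_pa L _ A B w))
  | painv E' w =>
    obtain ⟨e', rfl⟩ := hL.pa_inj e
    cases w with
    | nil =>
      obtain ⟨rfl, rfl⟩ := hL.pa_inj e'
      exact paAnalysable_kappa .nil
        (by dsimp [kappa, Hpa, Lpa, Rpa]; simp [L.paHom_id, L.pα_pαInv])
    | pa A' w =>
      obtain ⟨rfl, rfl⟩ := hL.pa_inj e'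
      exact .eqToHom_comp e
        (paAnalysable_kappa (.pa A (.painv E w)) (pα_comp_kappa_painv_pa L _ A E w))
    | painv B' w =>
      obtain ⟨rfl, rfl⟩ := hL.pa_inj e'
      exact .eqToHom_comp e
        (paAnalysable_of_eq (.painv (L.pa B E) w) (𝟙 _) _ (pα_comp_kappa_painv_painv L _ B E w))
    | dl | dr => exact (hL.ot_ne_pa e'.symm).elim
  | dl | dr => exact (hL.ot_ne_pa e.symm).elim

lemma kappaAnalysable_pαInv (hL : L.Tidy) (A B E : C) : KappaAnalysable L (L.pαInv A B E) := by
  intro Y Z w e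
  cases w with
  | nil =>
    obtain ⟨rfl, rfl⟩ := hL.pa_inj e
    exact paAnalysable_kappa (.painv E .nil) (by dsimp [kappa, Hpa, Lpa, Rpa]; simp [L.paHom_id])
  | pa A' w =>
    obtain ⟨rfl, e'⟩ := hL.pa_inj e
    cases w with
    | nil =>
      obtain ⟨rfl, rfl⟩ := hL.pa_inj e'
      exact paAnalysable_kappa .nil
        (by dsimp [kappa, Hpa, Lpa, Rpa]; simp [L.paHom_id, L.pαInv_pα])
    | pa B' w =>
      obtain ⟨rfl, rfl⟩ := hL.pa_inj e'
      exact .eqToHom_comp e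
        (paAnalysable_of_eq (.pa (L.pa A B) w) _ (𝟙 _) (pαInv_comp_kappa_pa_pa L _ A B w))
    | painv E' w =>
      obtain ⟨rfl, rfl⟩ := hL.pa_inj e'
      exact .eqToHom_comp e
        (paAnalysable_kappa (.painv E (.pa A w)) (pαInv_comp_kappa_pa_painv L _ A E w))
    | dl | dr => exact (hL.ot_ne_pa e'.symm).elim
  | painv E' w =>
    obtain ⟨rfl, rfl⟩ := hL.pa_inj e
    exact .eqToHom_comp e
      (paAnalysable_of_eq (.painv E (.painv B w)) (𝟙 _) _ (pαInv_comp_kappa_painv L _ B E w))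
  | dl | dr => exact (hL.ot_ne_pa e.symm).elim

lemma kappaAnalysable_δl (hL : L.Tidy) (A B E : C) : KappaAnalysable L (L.δl A B E) := by
  intro Y Z w e
  cases w with
  | nil =>
    obtain ⟨rfl, rfl⟩ := hL.pa_inj e
    exact paAnalysable_kappa (.dl A .nil) (by dsimp [kappa, Hpa, Lpa, Rpa]; simp [L.otHom_id])
  | pa A' w =>
    obtain ⟨rfl, rfl⟩ := hL.pa_inj e
    exact .eqToHom_comp e
      (paAnalysable_of_eq (.dl A (.pa B w)) _ (𝟙 _) (δl_comp_kappa_pa L _ A B w))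
  | painv E' w =>
    obtain ⟨e', rfl⟩ := hL.pa_inj e
    cases w with
    | nil | pa | painv => exact (hL.ot_ne_pa e').elim
    | dl A' w =>
      obtain ⟨rfl, rfl⟩ := hL.ot_inj e'
      exact .eqToHom_comp e
        (paAnalysable_kappa (.dl A (.painv E w)) (δl_comp_kappa_painv_dl L _ A E w))
    | dr B' w =>
      obtain ⟨rfl, rfl⟩ := hL.ot_inj e'
      exact .eqToHom_comp e
        (paAnalysable_of_eq (.dr (L.pa B E) w) (𝟙 _) _ (δl_comp_kappa_painv_dr L _ B E w))
  | dl | dr => exact (hL.ot_ne_pa e.symm).elim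

lemma kappaAnalysable_δr (hL : L.Tidy) (A B E : C) : KappaAnalysable L (L.δr A B E) := by
  intro Y Z w e
  cases w with
  | nil =>
    obtain ⟨rfl, rfl⟩ := hL.pa_inj e
    exact paAnalysable_kappa (.dr E .nil) (by dsimp [kappa, Hpa, Lpa, Rpa]; simp [L.otHom_id])
  | pa A' w =>
    obtain ⟨rfl, e'⟩ := hL.pa_inj e
    cases w with
    | nil | pa | painv => exact (hL.ot_ne_pa e').elim
    | dl B' w =>
      obtain ⟨rfl, rfl⟩ := hL.ot_inj e'
      exact .eqToHom_comp e
        (paAnalysable_of_eq (.dl (L.pa A B) w) _ (𝟙 _) (δr_comp_kappa_pa_dl L _ A B w))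
    | dr E' w =>
      obtain ⟨rfl, rfl⟩ := hL.ot_inj e'
      exact .eqToHom_comp e (paAnalysable_kappa (.dr E (.pa A w)) (δr_comp_kappa_pa_dr L _ A E w))
  | painv E' w =>
    obtain ⟨rfl, rfl⟩ := hL.pa_inj e
    exact .eqToHom_comp e
      (paAnalysable_of_eq (.dr E (.painv B w)) (𝟙 _) _ (δr_comp_kappa_painv L _ B E w))
  | dl | dr => exact (hL.ot_ne_pa e.symm).elim

lemma kappaAnalysable_α (hL : L.Tidy) (A B E : C) : KappaAnalysable L (L.α A B E) := by
  intro Y Z w e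
  cases w with
  | nil | pa | painv => exact (hL.ot_ne_pa e).elim
  | dl A' w =>
    obtain ⟨rfl, rfl⟩ := hL.ot_inj e
    exact .eqToHom_comp e
      (paAnalysable_of_eq (.dl A (.dl B w)) _ (𝟙 _) (α_comp_kappa_dl L _ A B w))
  | dr E' w =>
    obtain ⟨e', rfl⟩ := hL.ot_inj e
    cases w with
    | nil | pa | painv => exact (hL.ot_ne_pa e').elim
    | dl A' w =>
      obtain ⟨rfl, rfl⟩ := hL.ot_inj e'
      exact .eqToHom_comp e (paAnalysable_kappa (.dl A (.dr E w)) (α_comp_kappa_dr_dl L _ A E w))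
    | dr B' w =>
      obtain ⟨rfl, rfl⟩ := hL.ot_inj e'
      exact .eqToHom_comp e
        (paAnalysable_of_eq (.dr (L.ot B E) w) (𝟙 _) _ (α_comp_kappa_dr_dr L _ B E w))

lemma kappaAnalysable_αInv (hL : L.Tidy) (A B E : C) : KappaAnalysable L (L.αInv A B E) := by
  intro Y Z w e
  cases w with
  | nil | pa | painv => exact (hL.ot_ne_pa e).elim
  | dl A' w =>
    obtain ⟨rfl, e'⟩ := hL.ot_inj e
    cases w with
    | nil | pa | painv => exact (hL.ot_ne_pa e').elim
    | dl B' w =>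
      obtain ⟨rfl, rfl⟩ := hL.ot_inj e'
      exact .eqToHom_comp e
        (paAnalysable_of_eq (.dl (L.ot A B) w) _ (𝟙 _) (αInv_comp_kappa_dl_dl L _ A B w))
    | dr E' w =>
      obtain ⟨rfl, rfl⟩ := hL.ot_inj e'
      exact .eqToHom_comp e
        (paAnalysable_kappa (.dr E (.dl A w)) (αInv_comp_kappa_dl_dr L _ A E w))
  | dr E' w =>
    obtain ⟨rfl, rfl⟩ := hL.ot_inj e
    exact .eqToHom_comp e
      (paAnalysable_of_eq (.dr E (.dr B w)) (𝟙 _) _ (αInv_comp_kappa_dr L _ B E w))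

lemma KappaAnalysable.otHom_id_left (hL : L.Tidy) {W T : C} {h : W ⟶ T}
    (hh : KappaAnalysable L h) (A : C) :
    KappaAnalysable L (L.otHom (𝟙 A) h) := by
  intro Y Z w e
  cases w with
  | nil | pa | painv => exact (hL.ot_ne_pa e).elim
  | dl A' w =>
    obtain ⟨rfl, rfl⟩ := hL.ot_inj e
    refine .eqToHom_comp e ?_
    have := (hh w rfl).otHom_id_comp_δl hL A
    rwa [eqToHom_refl, Category.id_comp, L.otHom_id_comp, Category.assoc] at this
  | dr A' w =>
    obtain ⟨rfl, rfl⟩ := hL.ot_inj e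
    exact .eqToHom_comp e (paAnalysable_of_eq (.dr W w) (𝟙 _) _ (otHom_comp_kappa_dr L _ h w))

lemma KappaAnalysable.otHom_id_right (hL : L.Tidy) {W T : C} {h : W ⟶ T}
    (hh : KappaAnalysable L h) (A : C) :
    KappaAnalysable L (L.otHom h (𝟙 A)) := by
  intro Y Z w e
  cases w with
  | nil | pa | painv => exact (hL.ot_ne_pa e).elim
  | dl A' w =>
    obtain ⟨rfl, rfl⟩ := hL.ot_inj e
    exact .eqToHom_comp e (paAnalysable_of_eq (.dl W w) _ (𝟙 _) (otHom_comp_kappa_dl L _ h w))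
  | dr A' w =>
    obtain ⟨rfl, rfl⟩ := hL.ot_inj e
    refine .eqToHom_comp e ?_
    have := (hh w rfl).otHom_comp_δr hL A
    rwa [eqToHom_refl, Category.id_comp, L.otHom_comp_id, Category.assoc] at this

lemma KappaAnalysable.paHom_id_left (hL : L.Tidy) {W T : C} {h : W ⟶ T}
    (hh : KappaAnalysable L h) (A : C) :
    KappaAnalysable L (L.paHom (𝟙 A) h) := by
  intro Y Z w e
  cases w with
  | nil =>
    obtain ⟨rfl, rfl⟩ := hL.pa_inj e
    exact .eqToHom_comp e
      (paAnalysable_of_eq .nil (𝟙 _) h ((Category.comp_id _).trans (Category.id_comp _).symm))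
  | pa A' w =>
    obtain ⟨rfl, rfl⟩ := hL.pa_inj e
    refine .eqToHom_comp e ?_
    have := (hh w rfl).paHom_id_comp_pα hL A
    rwa [eqToHom_refl, Category.id_comp, L.paHom_id_comp, Category.assoc] at this
  | painv A' w =>
    obtain ⟨rfl, rfl⟩ := hL.pa_inj e
    exact .eqToHom_comp e
      (paAnalysable_of_eq (.painv W w) (𝟙 _) _ (paHom_comp_kappa_painv L _ h w))
  | dl | dr => exact (hL.ot_ne_pa e.symm).elim

lemma KappaAnalysable.paHom_id_right (hL : L.Tidy) {W T : C} {h : W ⟶ T}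
    (hh : KappaAnalysable L h) (A : C) :
    KappaAnalysable L (L.paHom h (𝟙 A)) := by
  intro Y Z w e
  cases w with
  | nil =>
    obtain ⟨rfl, rfl⟩ := hL.pa_inj e
    exact .eqToHom_comp e
      (paAnalysable_of_eq .nil h (𝟙 _) ((Category.comp_id _).trans (Category.id_comp _).symm))
  | pa A' w =>
    obtain ⟨rfl, rfl⟩ := hL.pa_inj e
    exact .eqToHom_comp e (paAnalysable_of_eq (.pa W w) _ (𝟙 _) (paHom_comp_kappa_pa L _ h w))
  | painv A' w =>
    obtain ⟨rfl, rfl⟩ := hL.pa_inj e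
    refine .eqToHom_comp e ?_
    have := (hh w rfl).paHom_comp_pαInv hL A
    rwa [eqToHom_refl, Category.id_comp, L.paHom_comp_id, Category.assoc] at this
  | dl | dr => exact (hL.ot_ne_pa e.symm).elim

lemma Atomic.kappaAnalysable (hL : L.Tidy) {W T : C} {h : W ⟶ T} (hh : Atomic L h) :
    KappaAnalysable L h := by
  induction hh with
  | alpha A B E => exact kappaAnalysable_α hL A B E
  | alphaInv A B E => exact kappaAnalysable_αInv hL A B E
  | palpha A B E => exact kappaAnalysable_pα hL A B E
  | palphaInv A B E => exact kappaAnalysable_pαInv hL A B E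
  | dl A B E => exact kappaAnalysable_δl hL A B E
  | dr A B E => exact kappaAnalysable_δr hL A B E
  | otLeftId h A _ ih => exact ih.otHom_id_left hL A
  | otRightId h A _ ih => exact ih.otHom_id_right hL A
  | paLeftId h A _ ih => exact ih.paHom_id_left hL A
  | paRightId h A _ ih => exact ih.paHom_id_right hL A

end AtomicAnalysable

section Elementary

variable {L : LD C}

lemma Atomic.target_ot_or_pa {W T : C} {h : W ⟶ T} (hh : Atomic L h) :
    (∃ A B, T = L.ot A B) ∨ ∃ A B, T = L.pa A B := by
  cases hh
  all_goals first | exact .inl ⟨_, _, rfl⟩ | exact .inr ⟨_, _, rfl⟩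

lemma Elementary.exists_eq_eqToHom {W T : C} {f : W ⟶ T} (hf : Elementary L f)
    (hot : ¬∃ A B, T = L.ot A B) (hpa : ¬∃ A B, T = L.pa A B) :
    ∃ e : W = T, f = eqToHom e := by
  induction hf with
  | id X => exact ⟨rfl, (eqToHom_refl X rfl).symm⟩
  | of hh => exact (hh.target_ot_or_pa.elim hot hpa).elim
  | comp _ _ ih₁ ih₂ =>
    obtain ⟨rfl, rfl⟩ := ih₂ hot hpa
    obtain ⟨rfl, rfl⟩ := ih₁ hot hpa
    exact ⟨rfl, by simp⟩

lemma Elementary.comp_otAnalysable (hL : L.Tidy) {W T : C} {f : W ⟶ T} (hf : Elementary L f) :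
    ∀ {U : C} {g : T ⟶ U}, OtAnalysable L (IdOtSet L) g →
      OtAnalysable L (IdOtSet L) (f ≫ g) := by
  induction hf with
  | id _ => intro U g hg; rwa [Category.id_comp]
  | of hh =>
    intro U g hg
    obtain ⟨_, Y, Z, _, ⟨rfl, rfl⟩, w, Q₁, Q₂, g', g'', hP, rfl, rfl⟩ := hg
    simpa using (hh.tauAnalysable hL w hP).comp_otHom hL g' g''
  | comp _ _ ih₁ ih₂ => intro U g hg; rw [Category.assoc]; exact ih₁ (ih₂ hg)

lemma Elementary.comp_paAnalysable (hL : L.Tidy) {W T : C} {f : W ⟶ T} (hf : Elementary L f) :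
    ∀ {U : C} {g : T ⟶ U}, PaAnalysable L (IdPaSet L) g →
      PaAnalysable L (IdPaSet L) (f ≫ g) := by
  induction hf with
  | id _ => intro U g hg; rwa [Category.id_comp]
  | of hh =>
    intro U g hg
    obtain ⟨_, Y, Z, _, ⟨rfl, rfl⟩, w, Q₁, Q₂, g', g'', hP, rfl, rfl⟩ := hg
    simpa using (hh.kappaAnalysable hL w hP).comp_paHom hL g' g''
  | comp _ _ ih₁ ih₂ => intro U g hg; rw [Category.assoc]; exact ih₁ (ih₂ hg)

end Elementary

/-- **Normal form for elementary morphisms in a tidy LD category**: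
(i) if the target is not a tensor product, the morphism is an identity;
(ii) if the target is an ⊗-product, it is `Id^⊗`-analysable;
(iii) if the target is a ⅋-product, it is `Id^⅋`-analysable. -/
theorem elementary_normal_form {C : Type u} [Category.{v} C]
    (L : LD C) (hTidy : L.Tidy)
    {W T : C} (f : W ⟶ T) (hf : Elementary L f) :
    ((¬ ∃ A B : C, T = L.ot A B) → (¬ ∃ A B : C, T = L.pa A B) →
        ∃ e : W = T, f = eqToHom e) ∧
    ((∃ A B : C, T = L.ot A B) → OtAnalysable L (IdOtSet L) f) ∧
    ((∃ A B : C, T = L.pa A B) → PaAnalysable L (IdPaSet L) f) := by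
  refine ⟨hf.exists_eq_eqToHom, ?_, ?_⟩
  · rintro ⟨A, B, rfl⟩
    simpa using hf.comp_otAnalysable hTidy (otAnalysable_id A B)
  · rintro ⟨A, B, rfl⟩
    simpa using hf.comp_paAnalysable hTidy (paAnalysable_id A B)

end LDCoherence
end

section
/- Uniqueness of ⊗-factorisation data: let C be a tidy LD category equipped with a rank function ‖·‖ (as is the case for the free LD category on a set). If i, j are identity morphisms of ⊗-products, u, v ∈ 𝔜 are words, and Ā ∈ Ob(C)^{|u|}, B̄ ∈ Ob(C)^{|v|} are vectors such that H^i_u(Ā) = H^j_v(B̄) and ‖L^i_u(Ā)‖ = ‖L^j_v(B̄)‖, then i = j, u = v, and Ā = B̄. -/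
open CategoryTheory

namespace LDCoherence

universe v u v₁ u₁ v₂ u₂

variable {C : Type u} [Category.{v} C]

variable {Cc : Type u₁} [Category.{v₁} Cc] {Dd : Type u₂} [Category.{v₂} Dd]
  {LC : LD Cc} {LDd : LD Dd}

/-- Rank of `H` is the sum of the ranks of `L` and `R`. -/
lemma rank_Hot {C : Type u} [Category.{v} C] (L : LD C) (rank : C → ℕ)
    (hrot : ∀ X Y : C, rank (L.ot X Y) = rank X + rank Y) (Y Z : C) :
    ∀ w : YW C, rank (Hot L (L.ot Y Z) w) = rank (Lot L Y w) + rank (Rot L Z w) := by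
  intro w
  induction w with
  | nil => simpa [Hot, Lot, Rot] using hrot Y Z
  | a A w ih => simp [Hot, Lot, Rot, hrot, ih]; omega
  | ainv A w ih => simp [Hot, Lot, Rot, hrot, ih]; omega

/-- **Uniqueness of ⊗-factorisation data** in a tidy LD category equipped with a rank
function: the data `(i, u, Ā)` with `i = id` of an ⊗-product is determined by
`H^i_u(Ā)` together with the rank of `L^i_u(Ā)`. -/
theorem ot_factorisation_data_unique {C : Type u} [Category.{v} C]
    (L : LD C) (hTidy : L.Tidy)
    (rank : C → ℕ) (hpos : ∀ X : C, 0 < rank X)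
    (hrot : ∀ X Y : C, rank (L.ot X Y) = rank X + rank Y)
    (hrpa : ∀ X Y : C, rank (L.pa X Y) = rank X + rank Y)
    (Y Z Y' Z' : C) (w₁ w₂ : YW C)
    (hH : Hot L (L.ot Y Z) w₁ = Hot L (L.ot Y' Z') w₂)
    (hL : rank (Lot L Y w₁) = rank (Lot L Y' w₂)) :
    Y = Y' ∧ Z = Z' ∧ w₁ = w₂ := by
  induction w₁ generalizing w₂ with
  | nil =>
    cases w₂ with
    | nil =>
      obtain ⟨h1, h2⟩ := hTidy.1 _ _ _ _ hH
      exact ⟨h1, h2, rfl⟩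
    | a B v =>
      obtain ⟨h1, h2⟩ := hTidy.1 _ _ _ _ hH
      simp only [Lot] at hL
      rw [hrot] at hL
      have := hpos (Lot L Y' v)
      rw [h1] at hL
      omega
    | ainv B v =>
      obtain ⟨h1, h2⟩ := hTidy.1 _ _ _ _ hH
      simp only [Lot] at hL
      have hr := rank_Hot L rank hrot Y' Z' v
      have := hpos (Rot L Z' v)
      rw [← h1] at hr
      omega
  | a A u ih =>
    cases w₂ with
    | nil =>
      obtain ⟨h1, h2⟩ := hTidy.1 _ _ _ _ hH
      simp only [Lot] at hL
      rw [hrot] at hL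
      have := hpos (Lot L Y u)
      rw [h1] at hL
      omega
    | a B v =>
      obtain ⟨h1, h2⟩ := hTidy.1 _ _ _ _ hH
      simp only [Lot] at hL
      rw [hrot, hrot, h1] at hL
      obtain ⟨e1, e2, e3⟩ := ih v h2 (by omega)
      exact ⟨e1, e2, by rw [h1, e3]⟩
    | ainv B v =>
      obtain ⟨h1, h2⟩ := hTidy.1 _ _ _ _ hH
      simp only [Lot] at hL
      rw [hrot] at hL
      have hr := rank_Hot L rank hrot Y' Z' v
      have := hpos (Rot L Z' v)
      have := hpos (Lot L Y u)
      rw [← h1] at hr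
      omega
  | ainv A u ih =>
    cases w₂ with
    | nil =>
      obtain ⟨h1, h2⟩ := hTidy.1 _ _ _ _ hH
      simp only [Lot] at hL
      have hr := rank_Hot L rank hrot Y Z u
      have := hpos (Rot L Z u)
      rw [h1] at hr
      omega
    | a B v =>
      obtain ⟨h1, h2⟩ := hTidy.1 _ _ _ _ hH
      simp only [Lot] at hL
      rw [hrot] at hL
      have hr := rank_Hot L rank hrot Y Z u
      have := hpos (Rot L Z u)
      have := hpos (Lot L Y' v)
      rw [h1] at hr
      omega
    | ainv B v =>
      obtain ⟨h1, h2⟩ := hTidy.1 _ _ _ _ hH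
      simp only [Lot] at hL
      obtain ⟨e1, e2, e3⟩ := ih v h1 hL
      exact ⟨e1, e2, by rw [h2, e3]⟩

end LDCoherence
end

section
/- Uniqueness of ⅋-factorisation data: let C be a tidy LD category equipped with a rank function ‖·‖ (as is the case for the free LD category on a set). If i, j are identity morphisms of ⅋-products, u, v ∈ 𝔝 are words, and Ā ∈ Ob(C)^{|u|}, B̄ ∈ Ob(C)^{|v|} are vectors such that H^i_u(Ā) = H^j_v(B̄) and ‖L^i_u(Ā)‖ = ‖L^j_v(B̄)‖, then i = j, u = v, and Ā = B̄. -/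
open CategoryTheory

namespace LDCoherence

universe v u v₁ u₁ v₂ u₂

variable {C : Type u} [Category.{v} C]

variable {Cc : Type u₁} [Category.{v₁} Cc] {Dd : Type u₂} [Category.{v₂} Dd]
  {LC : LD Cc} {LDd : LD Dd}

private lemma rank_Hpa {C : Type u} [Category.{v} C] (L : LD C) (rank : C → ℕ)
    (hrot : ∀ X Y : C, rank (L.ot X Y) = rank X + rank Y)
    (hrpa : ∀ X Y : C, rank (L.pa X Y) = rank X + rank Y)
    (Y Z : C) : ∀ w : ZW C,
    rank (Hpa L (L.pa Y Z) w) = rank (Lpa L Y w) + rank (Rpa L Z w)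
  | .nil => hrpa Y Z
  | .pa A w => by
      simp only [Hpa, Lpa, Rpa, hrpa, rank_Hpa L rank hrot hrpa Y Z w]; omega
  | .painv A w => by
      simp only [Hpa, Lpa, Rpa, hrpa, rank_Hpa L rank hrot hrpa Y Z w]; omega
  | .dl A w => by
      simp only [Hpa, Lpa, Rpa, hrot, rank_Hpa L rank hrot hrpa Y Z w]; omega
  | .dr A w => by
      simp only [Hpa, Lpa, Rpa, hrot, rank_Hpa L rank hrot hrpa Y Z w]; omega

/-- **Uniqueness of ⅋-factorisation data** in a tidy LD category equipped with a rank
function: the data `(i, u, Ā)` with `i = id` of a ⅋-product is determined by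
`H^i_u(Ā)` together with the rank of `L^i_u(Ā)`. -/
theorem pa_factorisation_data_unique {C : Type u} [Category.{v} C]
    (L : LD C) (hTidy : L.Tidy)
    (rank : C → ℕ) (hpos : ∀ X : C, 0 < rank X)
    (hrot : ∀ X Y : C, rank (L.ot X Y) = rank X + rank Y)
    (hrpa : ∀ X Y : C, rank (L.pa X Y) = rank X + rank Y)
    (Y Z Y' Z' : C) (w₁ w₂ : ZW C)
    (hH : Hpa L (L.pa Y Z) w₁ = Hpa L (L.pa Y' Z') w₂)
    (hL : rank (Lpa L Y w₁) = rank (Lpa L Y' w₂)) :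
    Y = Y' ∧ Z = Z' ∧ w₁ = w₂ := by
  obtain ⟨hot, hpa2, hotpa⟩ := hTidy
  induction w₁ generalizing Y Z Y' Z' w₂ with
  | nil =>
    cases w₂ with
    | nil =>
      obtain ⟨h1, h2⟩ := hpa2 _ _ _ _ hH
      exact ⟨h1, h2, rfl⟩
    | pa A w =>
      exfalso
      simp only [Hpa] at hH
      obtain ⟨h1, h2⟩ := hpa2 _ _ _ _ hH
      simp only [Lpa] at hL
      rw [hrpa, h1] at hL
      have := hpos (Lpa L Y' w)
      omega
    | painv A w =>
      exfalso
      simp only [Hpa] at hH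
      obtain ⟨h1, h2⟩ := hpa2 _ _ _ _ hH
      simp only [Lpa] at hL
      have hr := rank_Hpa L rank hrot hrpa Y' Z' w
      rw [h1, hr] at hL
      have := hpos (Rpa L Z' w)
      omega
    | dl A w => exact absurd hH.symm (hotpa _ _ _ _)
    | dr A w => exact absurd hH.symm (hotpa _ _ _ _)
  | pa A w ih =>
    cases w₂ with
    | nil =>
      exfalso
      simp only [Hpa] at hH
      obtain ⟨h1, h2⟩ := hpa2 _ _ _ _ hH
      simp only [Lpa] at hL
      rw [hrpa, h1] at hL
      have := hpos (Lpa L Y w)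
      omega
    | pa A' w' =>
      simp only [Hpa] at hH
      obtain ⟨h1, h2⟩ := hpa2 _ _ _ _ hH
      simp only [Lpa] at hL
      rw [hrpa, hrpa, h1] at hL
      obtain ⟨e1, e2, e3⟩ := ih Y Z Y' Z' w' h2 (by omega)
      exact ⟨e1, e2, by rw [h1, e3]⟩
    | painv A' w' =>
      exfalso
      simp only [Hpa] at hH
      obtain ⟨h1, h2⟩ := hpa2 _ _ _ _ hH
      simp only [Lpa] at hL
      have hr := rank_Hpa L rank hrot hrpa Y' Z' w'
      rw [hrpa, h1, hr] at hL
      have := hpos (Lpa L Y w)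
      have := hpos (Rpa L Z' w')
      omega
    | dl A' w' => exact absurd hH.symm (hotpa _ _ _ _)
    | dr A' w' => exact absurd hH.symm (hotpa _ _ _ _)
  | painv A w ih =>
    cases w₂ with
    | nil =>
      exfalso
      simp only [Hpa] at hH
      obtain ⟨h1, h2⟩ := hpa2 _ _ _ _ hH
      simp only [Lpa] at hL
      have hr := rank_Hpa L rank hrot hrpa Y Z w
      rw [← h1, hr] at hL
      have := hpos (Rpa L Z w)
      omega
    | pa A' w' =>
      exfalso
      simp only [Hpa] at hH
      obtain ⟨h1, h2⟩ := hpa2 _ _ _ _ hH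
      simp only [Lpa] at hL
      have hr := rank_Hpa L rank hrot hrpa Y Z w
      rw [hrpa, ← h1, hr] at hL
      have := hpos (Rpa L Z w)
      have := hpos (Lpa L Y' w')
      omega
    | painv A' w' =>
      simp only [Hpa] at hH
      obtain ⟨h1, h2⟩ := hpa2 _ _ _ _ hH
      simp only [Lpa] at hL
      obtain ⟨e1, e2, e3⟩ := ih Y Z Y' Z' w' h1 hL
      exact ⟨e1, e2, by rw [h2, e3]⟩
    | dl A' w' => exact absurd hH.symm (hotpa _ _ _ _)
    | dr A' w' => exact absurd hH.symm (hotpa _ _ _ _)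
  | dl A w ih =>
    cases w₂ with
    | nil => exact absurd hH (hotpa _ _ _ _)
    | pa A' w' => exact absurd hH (hotpa _ _ _ _)
    | painv A' w' => exact absurd hH (hotpa _ _ _ _)
    | dl A' w' =>
      simp only [Hpa] at hH
      obtain ⟨h1, h2⟩ := hot _ _ _ _ hH
      simp only [Lpa] at hL
      rw [hrot, hrot, h1] at hL
      obtain ⟨e1, e2, e3⟩ := ih Y Z Y' Z' w' h2 (by omega)
      exact ⟨e1, e2, by rw [h1, e3]⟩
    | dr A' w' =>
      exfalso
      simp only [Hpa] at hH
      obtain ⟨h1, h2⟩ := hot _ _ _ _ hH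
      simp only [Lpa] at hL
      have hr := rank_Hpa L rank hrot hrpa Y' Z' w'
      rw [hrot, h1, hr] at hL
      have := hpos (Lpa L Y w)
      have := hpos (Rpa L Z' w')
      omega
  | dr A w ih =>
    cases w₂ with
    | nil => exact absurd hH (hotpa _ _ _ _)
    | pa A' w' => exact absurd hH (hotpa _ _ _ _)
    | painv A' w' => exact absurd hH (hotpa _ _ _ _)
    | dl A' w' =>
      exfalso
      simp only [Hpa] at hH
      obtain ⟨h1, h2⟩ := hot _ _ _ _ hH
      simp only [Lpa] at hL
      have hr := rank_Hpa L rank hrot hrpa Y Z w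
      rw [hrot, ← h1, hr] at hL
      have := hpos (Rpa L Z w)
      have := hpos (Lpa L Y' w')
      omega
    | dr A' w' =>
      simp only [Hpa] at hH
      obtain ⟨h1, h2⟩ := hot _ _ _ _ hH
      simp only [Lpa] at hL
      obtain ⟨e1, e2, e3⟩ := ih Y Z Y' Z' w' h1 hL
      exact ⟨e1, e2, by rw [h2, e3]⟩

end LDCoherence
end
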